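/- arXiv:0909.1198 — 9 statements merged into one kernel-verified Lean document; each statement's English description precedes it below -/
import Mathlib

section
/- Every separable metric space has a countable pseudobase consisting of closed sets. -/
/-- A pseudobase for a topological space `X`: a family of nonempty subsets of `X`,
closed under nonempty (binary, hence finite) intersections, such that whenever a
sequence `u` converges to `x` and `x ∈ O` with `O` open, some member `p` of the family
satisfies `x ∈ p ⊆ O` and `u n ∈ p` for almost all `n`. -/
def IsPseudobase {X : Type*} [TopologicalSpace X] (P : Set (Set X)) : Prop :=
  (∀ p ∈ P, Set.Nonempty p) ∧
  (∀ p ∈ P, ∀ q ∈ P, (p ∩ q).Nonempty → p ∩ q ∈ P) ∧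
  ∀ (x : X) (u : ℕ → X), Filter.Tendsto u Filter.atTop (nhds x) →
    ∀ O : Set X, IsOpen O → x ∈ O →
      ∃ p ∈ P, x ∈ p ∧ p ⊆ O ∧ ∀ᶠ n in Filter.atTop, u n ∈ p

/-- Every separable metric space has a countable pseudobase consisting of closed sets. -/
theorem separable_metric_has_countable_closed_pseudobase
    (X : Type*) [MetricSpace X] [TopologicalSpace.SeparableSpace X] :
    ∃ P : Set (Set X), P.Countable ∧ IsPseudobase P ∧ ∀ p ∈ P, IsClosed p := by
  obtain ⟨D, Dcount, Ddense⟩ := TopologicalSpace.exists_countable_dense X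
  set B : Set (Set X) :=
    (fun p : X × ℚ => Metric.closedBall p.1 (p.2 : ℝ)) '' (D ×ˢ {q : ℚ | 0 < q}) with hBdef
  have hBcount : B.Countable := (Dcount.prod (Set.to_countable _)).image _
  set P : Set (Set X) :=
    {s | s.Nonempty ∧ ∃ t : Set (Set X), t.Finite ∧ t.Nonempty ∧ t ⊆ B ∧ s = ⋂₀ t} with hPdef
  have hmem : ∀ s ∈ P, ∃ t : Set (Set X), t.Finite ∧ t.Nonempty ∧ t ⊆ B ∧ s = ⋂₀ t :=
    fun s hs => hs.2
  refine ⟨P, ?_, ⟨fun p hp => hp.1, ?_, ?_⟩, ?_⟩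
  · -- countable
    have : P ⊆ Set.sInter '' {t : Set (Set X) | t.Finite ∧ t ⊆ B} := by
      rintro s ⟨-, t, htf, -, htB, rfl⟩
      exact ⟨t, ⟨htf, htB⟩, rfl⟩
    exact Set.Countable.mono this ((Set.countable_setOf_finite_subset hBcount).image _)
  · -- closed under intersections
    rintro p ⟨-, t, htf, htne, htB, rfl⟩ q ⟨-, t', ht'f, ht'ne, ht'B, rfl⟩ hne
    refine ⟨hne, t ∪ t', htf.union ht'f,
      htne.mono Set.subset_union_left, Set.union_subset htB ht'B, (Set.sInter_union t t').symm⟩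
  · -- pseudobase condition
    intro x u hu O hO hxO
    obtain ⟨ε, hε, hball⟩ := Metric.isOpen_iff.1 hO x hxO
    obtain ⟨d, hdD, hd⟩ := Ddense.exists_dist_lt x (show (0:ℝ) < ε/4 by linarith)
    obtain ⟨r, hr1, hr2⟩ := exists_rat_btwn (show dist x d < ε/2 by
      have := dist_nonneg (x := x) (y := d); linarith)
    have hrpos : (0:ℝ) < r := lt_of_le_of_lt dist_nonneg hr1
    refine ⟨Metric.closedBall d r, ?_, ?_, ?_, ?_⟩
    · refine ⟨⟨d, Metric.mem_closedBall_self hrpos.le⟩, {Metric.closedBall d (r:ℝ)},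
        Set.finite_singleton _, Set.singleton_nonempty _, ?_, (Set.sInter_singleton _).symm⟩
      rintro s rfl
      exact ⟨(d, r), ⟨hdD, by exact_mod_cast hrpos⟩, rfl⟩
    · exact Metric.mem_closedBall.2 hr1.le
    · intro y hy
      apply hball
      have h1 : dist y d ≤ r := hy
      have h2 : dist d x < ε/2 := by rw [dist_comm]; linarith
      calc dist y x ≤ dist y d + dist d x := dist_triangle _ _ _
        _ < ε := by linarith
    · have hδ : (0:ℝ) < r - dist x d := by linarith
      filter_upwards [hu (Metric.ball_mem_nhds x hδ)] with n hn
      have : dist (u n) x < r - dist x d := hn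
      exact Metric.mem_closedBall.2 (le_trans (dist_triangle _ x d) (by linarith))
  · -- closed
    rintro p ⟨-, t, -, -, htB, rfl⟩
    refine isClosed_sInter fun s hs => ?_
    obtain ⟨⟨d, q⟩, -, rfl⟩ := htB hs
    exact Metric.isClosed_closedBall
end

section
/- Let X be a metric space, let x₁,…,xₙ ∈ X, and suppose positive reals a₁,…,aₙ are such that |aᵢ − aⱼ| ≤ d(xᵢ,xⱼ) ≤ aᵢ + aⱼ for all i,j. Then the function d'(x) = min{d(x,xᵢ) + aᵢ : 1 ≤ i ≤ n} defines a consistent one-point metric extension: the space X ∪ {y} with d(x,y) := d'(x) for x ∈ X (and d(y,y)=0) is a metric space extending X in which d(xᵢ,y) = aᵢ for each i. -/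
/-- One-point metric extension: given points `x i` and positive reals `a i` with
`|a i - a j| ≤ d(x i, x j) ≤ a i + a j`, the function
`D z = min_i (d(z, x i) + a i)` defines a consistent metric extension of `X` by a new
point `y` at distance `D z` from each `z ∈ X`: `D` is positive, satisfies both triangle
inequalities with the old metric, and realizes `D (x i) = a i`. -/
theorem onePoint_metric_extension
    (X : Type*) [MetricSpace X] (n : ℕ) (hn : 0 < n)
    (x : Fin n → X) (a : Fin n → ℝ) (hpos : ∀ i, 0 < a i)
    (hcomp : ∀ i j, |a i - a j| ≤ dist (x i) (x j) ∧ dist (x i) (x j) ≤ a i + a j) :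
    haveI : Nonempty (Fin n) := ⟨⟨0, hn⟩⟩
    ∀ D : X → ℝ,
      (D = fun z => Finset.univ.inf' Finset.univ_nonempty (fun i => dist z (x i) + a i)) →
      (∀ z, 0 < D z) ∧
      (∀ i, D (x i) = a i) ∧
      (∀ z w, dist z w ≤ D z + D w) ∧
      (∀ z w, D z ≤ dist z w + D w) := by
  haveI : Nonempty (Fin n) := ⟨⟨0, hn⟩⟩
  intro D hD
  subst hD
  refine ⟨?_, ?_, ?_, ?_⟩
  · intro z
    apply Finset.lt_inf'_iff (Finset.univ_nonempty) |>.2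
    intro i _
    have := dist_nonneg (x := z) (y := x i)
    linarith [hpos i]
  · intro i
    apply le_antisymm
    · calc Finset.univ.inf' Finset.univ_nonempty (fun j => dist (x i) (x j) + a j)
          ≤ dist (x i) (x i) + a i := Finset.inf'_le _ (Finset.mem_univ i)
        _ = a i := by simp
    · apply Finset.le_inf'
      intro j _
      have := (hcomp i j).1
      have := abs_le.1 this
      linarith [this.2, this.1]
  · intro z w
    obtain ⟨i, _, hi⟩ := Finset.exists_mem_eq_inf' Finset.univ_nonempty (fun i => dist z (x i) + a i)
    obtain ⟨j, _, hj⟩ := Finset.exists_mem_eq_inf' Finset.univ_nonempty (fun j => dist w (x j) + a j)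
    beta_reduce
    rw [hi, hj]
    calc dist z w ≤ dist z (x i) + dist (x i) (x j) + dist (x j) w := dist_triangle4 _ _ _ _
      _ ≤ dist z (x i) + (a i + a j) + dist (x j) w := by linarith [(hcomp i j).2]
      _ = (dist z (x i) + a i) + (dist w (x j) + a j) := by rw [dist_comm (x j) w]; ring
  · intro z w
    obtain ⟨j, _, hj⟩ := Finset.exists_mem_eq_inf' Finset.univ_nonempty (fun j => dist w (x j) + a j)
    beta_reduce
    rw [hj]
    calc Finset.univ.inf' Finset.univ_nonempty (fun i => dist z (x i) + a i)
        ≤ dist z (x j) + a j := Finset.inf'_le _ (Finset.mem_univ j)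
      _ ≤ dist z w + (dist w (x j) + a j) := by linarith [dist_triangle z w (x j)]
end

section
/- In the Urysohn space U, let B₁,…,Bₙ be closed balls where Bᵢ has center aᵢ and radius rᵢ, and assume no ball is contained in the interior of another. Then B₁ ∩ ⋯ ∩ Bₙ ≠ ∅ if and only if for all 1 ≤ i,j ≤ n, rᵢ − rⱼ ≤ d(aᵢ,aⱼ) ≤ rᵢ + rⱼ. -/
/-- A metric space is finitely saturated if every distance-preserving map from a subset
of a finite metric space into it extends to a distance-preserving map on the whole
finite space. -/
def FinitelySaturated (U : Type*) [MetricSpace U] : Prop :=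
  ∀ (L : Type) (_ : MetricSpace L) (_ : Fintype L) (K : Set L) (φ : K → U),
    (∀ a b : K, dist (φ a) (φ b) = dist (a : L) (b : L)) →
    ∃ ψ : L → U, (∀ a b : L, dist (ψ a) (ψ b) = dist a b) ∧ ∀ a : K, ψ a = φ a

/-- In the Urysohn space, a finite family of closed balls, none contained in the
interior of another, has nonempty intersection iff
`rᵢ − rⱼ ≤ d(aᵢ,aⱼ) ≤ rᵢ + rⱼ` for all `i, j`. -/
theorem urysohn_balls_intersection
    (U : Type*) [MetricSpace U] [CompleteSpace U] [TopologicalSpace.SeparableSpace U]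
    (hU : FinitelySaturated U)
    (n : ℕ) (c : Fin n → U) (r : Fin n → ℝ)
    (hni : ∀ i j, i ≠ j →
      ¬ Metric.closedBall (c i) (r i) ⊆ interior (Metric.closedBall (c j) (r j))) :
    (⋂ i, Metric.closedBall (c i) (r i)).Nonempty ↔
      ∀ i j, r i - r j ≤ dist (c i) (c j) ∧ dist (c i) (c j) ≤ r i + r j := by
  constructor
  · rintro ⟨x, hx⟩ i j
    simp only [Set.mem_iInter, Metric.mem_closedBall] at hx
    refine ⟨?_, ?_⟩
    · by_cases hij : i = j
      · subst hij; simp [dist_nonneg]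
      · by_contra hcon
        push_neg at hcon
        refine hni j i (Ne.symm hij) (fun y hy => ?_)
        refine Metric.ball_subset_interior_closedBall ?_
        rw [Metric.mem_closedBall] at hy
        rw [Metric.mem_ball]
        calc dist y (c i) ≤ dist y (c j) + dist (c j) (c i) := dist_triangle _ _ _
        _ < r j + (r i - r j) := by rw [dist_comm (c j)]; linarith
        _ = r i := by ring
    · calc dist (c i) (c j) ≤ dist (c i) x + dist x (c j) := dist_triangle _ _ _
      _ ≤ r i + r j := by
          rw [dist_comm (c i) x]; linarith [hx i, hx j]
  · intro h
    have rnn : ∀ i, 0 ≤ r i := by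
      intro i
      have := (h i i).2
      simp only [dist_self] at this
      linarith
    by_cases hz : ∃ i, r i = 0
    · obtain ⟨i, hi⟩ := hz
      refine ⟨c i, ?_⟩
      simp only [Set.mem_iInter, Metric.mem_closedBall]
      intro j
      have := (h i j).2
      linarith
    · push_neg at hz
      have rpos : ∀ i, 0 < r i := fun i => lt_of_le_of_ne (rnn i) (Ne.symm (hz i))
      classical
      -- quotient of indices by equal centers
      let st : Setoid (Fin n) := ⟨fun i j => c i = c j,
        ⟨fun _ => rfl, fun h => h.symm, fun h1 h2 => h1.trans h2⟩⟩
      let Q := Quotient st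
      let cb : Q → U := Quotient.lift c (fun _ _ hab => hab)
      have hreq : ∀ i j : Fin n, c i = c j → r i = r j := by
        intro i j hij
        have h1 := (h i j).1
        have h2 := (h j i).1
        rw [hij, dist_self] at h1 h2
        linarith
      let rb : Q → ℝ := Quotient.lift r hreq
      have rbpos : ∀ x : Q, 0 < rb x := by
        intro x
        obtain ⟨i, rfl⟩ := Quotient.exists_rep x
        exact rpos i
      have htri1 : ∀ x y : Q, rb x ≤ dist (cb x) (cb y) + rb y := by
        intro x y
        obtain ⟨i, rfl⟩ := Quotient.exists_rep x
        obtain ⟨j, rfl⟩ := Quotient.exists_rep y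
        show r i ≤ dist (c i) (c j) + r j
        linarith [(h i j).1]
      have htri2 : ∀ x y : Q, dist (cb x) (cb y) ≤ rb x + rb y := by
        intro x y
        obtain ⟨i, rfl⟩ := Quotient.exists_rep x
        obtain ⟨j, rfl⟩ := Quotient.exists_rep y
        exact (h i j).2
      have cbinj : Function.Injective cb := by
        intro x y hxy
        obtain ⟨i, rfl⟩ := Quotient.exists_rep x
        obtain ⟨j, rfl⟩ := Quotient.exists_rep y
        exact Quotient.sound hxy
      let d : Option Q → Option Q → ℝ := fun a b =>
        match a, b with
        | none, none => 0
        | none, some p => rb p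
        | some p, none => rb p
        | some p, some q => dist (cb p) (cb q)
      have dself : ∀ x : Option Q, d x x = 0 := by
        rintro (_ | p) <;> simp [d]
      have dcomm : ∀ x y : Option Q, d x y = d y x := by
        rintro (_ | p) (_ | q) <;> simp [d, dist_comm]
      have dtri : ∀ x y z : Option Q, d x z ≤ d x y + d y z := by
        rintro (_ | p) (_ | q) (_ | t)
        · show (0:ℝ) ≤ 0 + 0; norm_num
        · show rb t ≤ 0 + rb t; norm_num
        · show (0:ℝ) ≤ rb q + rb q; linarith [rbpos q]
        · show rb t ≤ rb q + dist (cb q) (cb t)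
          have := htri1 t q
          rw [dist_comm (cb t)] at this
          linarith
        · show rb p ≤ rb p + 0; norm_num
        · show dist (cb p) (cb t) ≤ rb p + rb t; exact htri2 p t
        · show rb p ≤ dist (cb p) (cb q) + rb q; exact htri1 p q
        · exact dist_triangle (cb p) (cb q) (cb t)
      have deq : ∀ x y : Option Q, d x y = 0 → x = y := by
        rintro (_ | p) (_ | q) h0
        · rfl
        · exact absurd h0 (ne_of_gt (rbpos q))
        · exact absurd h0 (ne_of_gt (rbpos p))
        · exact congrArg some (cbinj (dist_eq_zero.mp h0))
      letI : MetricSpace (Option Q) :=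
        { dist := d
          dist_self := dself
          dist_comm := dcomm
          dist_triangle := dtri
          eq_of_dist_eq_zero := fun {x y} => deq x y }
      letI : Fintype Q := Fintype.ofFinite Q
      letI : Fintype (Option Q) := instFintypeOption
      let K : Set (Option Q) := {x | x.isSome}
      let φ : K → U := fun x => cb ((x : Option Q).get x.2)
      have hφ : ∀ a b : K, dist (φ a) (φ b) = dist (a : Option Q) (b : Option Q) := by
        rintro ⟨a, ha⟩ ⟨b, hb⟩
        obtain ⟨p, rfl⟩ := Option.isSome_iff_exists.mp ha
        obtain ⟨q, rfl⟩ := Option.isSome_iff_exists.mp hb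
        rfl
      obtain ⟨ψ, hψd, hψe⟩ := hU (Option Q) inferInstance inferInstance K φ hφ
      refine ⟨ψ none, ?_⟩
      simp only [Set.mem_iInter, Metric.mem_closedBall]
      intro i
      have hpmem : (some (Quotient.mk st i) : Option Q) ∈ K := rfl
      have h1 : ψ (some (Quotient.mk st i)) = c i := by
        have := hψe ⟨some (Quotient.mk st i), hpmem⟩
        simpa [φ, cb] using this
      have h2 := hψd none (some (Quotient.mk st i))
      rw [h1] at h2
      rw [h2]
      show rb (Quotient.mk st i) ≤ r i
      exact le_of_eq rfl
end

section
/- Every separable metric space can be isometrically embedded into the Urysohn space U. -/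
section Aux

variable {U : Type*} [MetricSpace U] {X : Type*} [MetricSpace X]

lemma urysohn_step (hU : FinitelySaturated U) (x : ℕ → X) (n : ℕ) (f : Fin n → U)
    (hf : ∀ i j : Fin n, dist (f i) (f j) = dist (x i) (x j)) :
    ∃ f' : Fin (n + 1) → U,
      (∀ i j : Fin (n + 1), dist (f' i) (f' j) = dist (x i) (x j)) ∧
      ∀ i : Fin n, f' i.castSucc = f i := by
  classical
  set s : Finset X := (Finset.range (n + 1)).image x with hs
  let i2x : Fin s.card → X := fun i => (s.equivFin.symm i : X)
  have i2x_inj : Function.Injective i2x := by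
    intro a b h
    exact s.equivFin.symm.injective (Subtype.ext h)
  letI instL : MetricSpace (Fin s.card) := MetricSpace.induced i2x i2x_inj inferInstance
  have hdist : ∀ a b : Fin s.card, dist a b = dist (i2x a) (i2x b) := fun a b => rfl
  let K : Set (Fin s.card) := {i | ∃ j : Fin n, x j = i2x i}
  let φ : K → U := fun y => f y.2.choose
  have hφval : ∀ (y : K), x y.2.choose = i2x y := fun y => y.2.choose_spec
  have hφ : ∀ a b : K, dist (φ a) (φ b) = dist (a : Fin s.card) (b : Fin s.card) := by
    intro a b
    rw [show dist (φ a) (φ b) = dist (x a.2.choose) (x b.2.choose) from hf _ _,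
      hφval a, hφval b, hdist]
  obtain ⟨ψ, hψiso, hψext⟩ := hU (Fin s.card) instL (Fin.fintype _) K φ hφ
  have hmem : ∀ i : Fin (n + 1), x i ∈ s :=
    fun i => Finset.mem_image.2 ⟨i, Finset.mem_range.2 i.2, rfl⟩
  let idx : Fin (n + 1) → Fin s.card := fun i => s.equivFin ⟨x i, hmem i⟩
  have hidx : ∀ i, i2x (idx i) = x i := by
    intro i
    show ((s.equivFin.symm (s.equivFin ⟨x i, hmem i⟩)) : X) = x i
    rw [Equiv.symm_apply_apply]
  refine ⟨fun i => ψ (idx i), ?_, ?_⟩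
  · intro i j
    rw [hψiso, hdist, hidx, hidx]
  · intro i
    have hK : idx i.castSucc ∈ K := ⟨i, by rw [hidx]; simp⟩
    show ψ (idx i.castSucc) = f i
    rw [show ψ (idx i.castSucc) = φ ⟨idx i.castSucc, hK⟩ from hψext ⟨idx i.castSucc, hK⟩]
    show f hK.choose = f i
    have h0 : dist (f hK.choose) (f i) = dist (x hK.choose) (x i) := hf _ _
    have h1 : x hK.choose = x i := by
      have h2 := hK.choose_spec
      rw [h2, hidx i.castSucc]
      simp
    rw [h1, dist_self] at h0
    exact dist_eq_zero.1 h0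

noncomputable def urysohnChain (hU : FinitelySaturated U) (x : ℕ → X) :
    ∀ n : ℕ, {f : Fin n → U // ∀ i j : Fin n, dist (f i) (f j) = dist (x i) (x j)}
  | 0 => ⟨Fin.elim0, fun i => i.elim0⟩
  | n + 1 =>
    ⟨(urysohn_step hU x n (urysohnChain hU x n).1 (urysohnChain hU x n).2).choose,
      (urysohn_step hU x n (urysohnChain hU x n).1 (urysohnChain hU x n).2).choose_spec.1⟩

lemma urysohnChain_succ (hU : FinitelySaturated U) (x : ℕ → X) (n : ℕ) (i : Fin n) :
    (urysohnChain hU x (n + 1)).1 i.castSucc = (urysohnChain hU x n).1 i :=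
  (urysohn_step hU x n (urysohnChain hU x n).1 (urysohnChain hU x n).2).choose_spec.2 i

noncomputable def urysohnSeq (hU : FinitelySaturated U) (x : ℕ → X) : ℕ → U :=
  fun n => (urysohnChain hU x (n + 1)).1 ⟨n, Nat.lt_succ_self n⟩

lemma urysohnChain_eq_seq (hU : FinitelySaturated U) (x : ℕ → X) :
    ∀ n (i : Fin n), (urysohnChain hU x n).1 i = urysohnSeq hU x i := by
  intro n
  induction n with
  | zero => exact fun i => i.elim0
  | succ n ih =>
    intro i
    rcases Nat.lt_succ_iff_lt_or_eq.1 i.2 with h | h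
    · have : i = (⟨i.1, h⟩ : Fin n).castSucc := by ext; rfl
      rw [this, urysohnChain_succ, ih]
      rfl
    · have : i = (⟨n, Nat.lt_succ_self n⟩ : Fin (n + 1)) := by ext; exact h
      rw [this]
      show _ = urysohnSeq hU x n
      rfl

lemma urysohnSeq_dist (hU : FinitelySaturated U) (x : ℕ → X) (i j : ℕ) :
    dist (urysohnSeq hU x i) (urysohnSeq hU x j) = dist (x i) (x j) := by
  set n := max i j + 1
  have hi : i < n := Nat.lt_succ_of_le (le_max_left i j)
  have hj : j < n := Nat.lt_succ_of_le (le_max_right i j)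
  have := (urysohnChain hU x n).2 ⟨i, hi⟩ ⟨j, hj⟩
  rwa [urysohnChain_eq_seq, urysohnChain_eq_seq] at this

end Aux

/-- Every separable metric space embeds isometrically into the Urysohn space (here: any
finitely saturated complete separable metric space). -/
theorem separable_isometric_embedding_into_urysohn
    (U : Type*) [MetricSpace U] [CompleteSpace U] [TopologicalSpace.SeparableSpace U]
    (hU : FinitelySaturated U)
    (X : Type*) [MetricSpace X] [TopologicalSpace.SeparableSpace X] :
    ∃ φ : X → U, Isometry φ := by
  classical
  rcases isEmpty_or_nonempty X with hX | hX
  · exact ⟨fun p => (hX.false p).elim, fun p => (hX.false p).elim⟩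
  · let x := TopologicalSpace.denseSeq X
    have hx : DenseRange x := TopologicalSpace.denseRange_denseSeq X
    set f := urysohnSeq hU x with hf
    set D : Set X := Set.range x with hD
    -- the map on the dense subtype
    let g : D → U := fun p => f p.2.choose
    have hg : ∀ p q : D, dist (g p) (g q) = dist (p : X) (q : X) := by
      intro p q
      rw [show dist (g p) (g q) = dist (x p.2.choose) (x q.2.choose) from
        urysohnSeq_dist hU x _ _, p.2.choose_spec, q.2.choose_spec]
    have hgiso : Isometry g := Isometry.of_dist_eq (by
      intro p q; rw [hg]; exact rfl)
    have hgu : UniformContinuous g := hgiso.uniformContinuous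
    -- the inclusion D → X
    have h_e : IsUniformInducing (Subtype.val : D → X) :=
      isometry_subtype_coe.isUniformInducing
    have h_dense : DenseRange (Subtype.val : D → X) := by
      rw [denseRange_iff_closure_range, Subtype.range_coe]
      exact (denseRange_iff_closure_range.1 hx)
    let ψ : X → U := (h_e.isDenseInducing h_dense).extend g
    have hψu : UniformContinuous ψ := uniformContinuous_uniformly_extend h_e h_dense hgu
    have hψe : ∀ p : D, ψ (p : X) = g p := fun p =>
      uniformly_extend_of_ind h_e h_dense hgu p
    refine ⟨ψ, Isometry.of_dist_eq ?_⟩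
    intro p q
    -- density argument on X × X
    have hDd : Dense D := hx
    have hDD : Dense (D ×ˢ D : Set (X × X)) := hDd.prod hDd
    have hcont1 : Continuous fun pq : X × X => dist (ψ pq.1) (ψ pq.2) :=
      (hψu.continuous.comp continuous_fst).dist (hψu.continuous.comp continuous_snd)
    have hcont2 : Continuous fun pq : X × X => dist pq.1 pq.2 := continuous_dist
    have heq : (fun pq : X × X => dist (ψ pq.1) (ψ pq.2)) =
        fun pq : X × X => dist pq.1 pq.2 := by
      refine Continuous.ext_on hDD hcont1 hcont2 ?_
      rintro ⟨a, b⟩ ⟨ha, hb⟩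
      have h1 := hψe ⟨a, ha⟩
      have h2 := hψe ⟨b, hb⟩
      simp only at h1 h2 ⊢
      rw [h1, h2, hg]
    exact congrFun heq (p, q)
end

section
/- A complete separable metric space X is finitely saturated if and only if it satisfies the one-point extension property: for all x₁,…,xₙ ∈ X and nonnegative reals a₁,…,aₙ satisfying |aᵢ − aⱼ| ≤ d(xᵢ,xⱼ) ≤ aᵢ + aⱼ for all i,j, there exists u ∈ X with d(u,xᵢ) = aᵢ for all i. -/
section Construction

variable {X : Type*} [MetricSpace X] {n : ℕ} (x : Fin n → X) (a : Fin n → ℝ)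

/-- Setoid identifying indices with equal points. -/
def xSetoid : Setoid (Fin n) := ⟨fun i j => x i = x j, ⟨fun _ => rfl, Eq.symm, Eq.trans⟩⟩

/-- Quotient of indices. -/
def XQ : Type := Quotient (xSetoid x)

noncomputable instance : Fintype (XQ x) :=
  @Quotient.fintype _ _ (xSetoid x) fun _ _ => Classical.dec _

/-- Point map on the quotient. -/
def xQ : XQ x → X := Quotient.lift x fun _ _ h => h

variable (ha' : ∀ i j, x i = x j → a i = a j)

/-- Radius map on the quotient. -/
def aQ : XQ x → ℝ := Quotient.lift a fun i j h => ha' i j h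

/-- Distance on the one-point extension. -/
noncomputable def dO : Option (XQ x) → Option (XQ x) → ℝ
  | none, none => 0
  | none, some q => aQ x a ha' q
  | some q, none => aQ x a ha' q
  | some p, some q => dist (xQ x p) (xQ x q)

noncomputable def optMetric (hpos : ∀ i, 0 < a i)
    (h1 : ∀ i j, |a i - a j| ≤ dist (x i) (x j))
    (h2 : ∀ i j, dist (x i) (x j) ≤ a i + a j) :
    MetricSpace (Option (XQ x)) where
  dist := dO x a ha'
  dist_self o := by cases o with
    | none => rfl
    | some q =>
      show dist (xQ x q) (xQ x q) = 0
      simp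
  dist_comm o o' := by
    cases o <;> cases o' <;> simp [dO, dist_comm]
  dist_triangle o₁ o₂ o₃ := by
    have hapos : ∀ q, 0 < aQ x a ha' q := by
      intro q; induction q using Quotient.inductionOn with
      | h i => exact hpos i
    have hq1 : ∀ p q, |aQ x a ha' p - aQ x a ha' q| ≤ dist (xQ x p) (xQ x q) := by
      intro p q
      induction p using Quotient.inductionOn with
      | h i =>
        induction q using Quotient.inductionOn with
        | h j => exact h1 i j
    have hq2 : ∀ p q, dist (xQ x p) (xQ x q) ≤ aQ x a ha' p + aQ x a ha' q := by
      intro p q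
      induction p using Quotient.inductionOn with
      | h i =>
        induction q using Quotient.inductionOn with
        | h j => exact h2 i j
    cases o₁ with
    | none => cases o₂ with
      | none => cases o₃ with
        | none => simp [dO]
        | some r => simp [dO]
      | some q => cases o₃ with
        | none =>
          show (0:ℝ) ≤ aQ x a ha' q + aQ x a ha' q
          have := (hapos q).le; linarith
        | some r =>
          show aQ x a ha' r ≤ aQ x a ha' q + dist (xQ x q) (xQ x r)
          have := abs_le.1 (hq1 q r); linarith
    | some p => cases o₂ with
      | none => cases o₃ with
        | none =>
          show aQ x a ha' p ≤ aQ x a ha' p + 0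
          simp
        | some r => exact hq2 p r
      | some q => cases o₃ with
        | none =>
          show aQ x a ha' p ≤ dist (xQ x p) (xQ x q) + aQ x a ha' q
          have := abs_le.1 (hq1 p q); linarith
        | some r => exact dist_triangle (xQ x p) (xQ x q) (xQ x r)
  eq_of_dist_eq_zero := by
    intro o o' h
    cases o with
    | none => cases o' with
      | none => rfl
      | some q =>
        exfalso
        have : 0 < aQ x a ha' q := by
          induction q using Quotient.inductionOn with
          | h i => exact hpos i
        exact this.ne' h
    | some p => cases o' with
      | none =>
        exfalso
        have : 0 < aQ x a ha' p := by
          induction p using Quotient.inductionOn with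
          | h i => exact hpos i
        exact this.ne' h
      | some q =>
        have hx : xQ x p = xQ x q := eq_of_dist_eq_zero h
        induction p using Quotient.inductionOn with
        | h i =>
          induction q using Quotient.inductionOn with
          | h j => exact congrArg some (Quotient.sound hx)

end Construction

/-- A complete separable metric space is finitely saturated iff it has the one-point
extension property. -/
theorem finitelySaturated_iff_onePointExtension
    (X : Type*) [MetricSpace X] [CompleteSpace X] [TopologicalSpace.SeparableSpace X] :
    FinitelySaturated X ↔
      ∀ (n : ℕ) (x : Fin n → X) (a : Fin n → ℝ),
        (∀ i, 0 ≤ a i) →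
        (∀ i j, |a i - a j| ≤ dist (x i) (x j) ∧ dist (x i) (x j) ≤ a i + a j) →
        ∃ u : X, ∀ i, dist u (x i) = a i := by
  constructor
  · -- saturation → one-point extension
    intro hsat n x a ha hcond
    by_cases h0 : ∃ i, a i = 0
    · obtain ⟨i0, hi0⟩ := h0
      refine ⟨x i0, fun j => ?_⟩
      have h1 := (hcond i0 j).1
      have h2 := (hcond i0 j).2
      rw [hi0] at h1 h2
      rw [zero_sub, abs_neg, abs_of_nonneg (ha j)] at h1
      rw [zero_add] at h2
      exact le_antisymm h2 h1
    · push_neg at h0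
      have hpos : ∀ i, 0 < a i := fun i => (ha i).lt_of_ne (Ne.symm (h0 i))
      have ha' : ∀ i j, x i = x j → a i = a j := by
        intro i j hij
        have h1 := (hcond i j).1
        rw [hij, dist_self] at h1
        have := abs_le.1 h1
        linarith [this.1, this.2]
      letI M : MetricSpace (Option (XQ x)) :=
        optMetric x a ha' hpos (fun i j => (hcond i j).1) (fun i j => (hcond i j).2)
      set K : Set (Option (XQ x)) := {o | o.isSome = true} with hK
      have hmem : ∀ q : XQ x, (some q) ∈ K := fun q => rfl
      let φ : K → X := fun k => xQ x (k.1.get k.2)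
      have hiso : ∀ k k' : K, dist (φ k) (φ k') = dist (k : Option (XQ x)) (k' : Option (XQ x)) := by
        rintro ⟨k, hk⟩ ⟨k', hk'⟩
        cases k with
        | none => exact absurd hk (by simp [hK, Set.mem_setOf_eq])
        | some p =>
          cases k' with
          | none => exact absurd hk' (by simp [hK, Set.mem_setOf_eq])
          | some q => rfl
      obtain ⟨ψ, hψiso, hψval⟩ := hsat (Option (XQ x)) M inferInstance K φ hiso
      refine ⟨ψ none, fun i => ?_⟩
      have hx : ψ (some (Quotient.mk (xSetoid x) i)) = x i := by
        have := hψval ⟨some (Quotient.mk (xSetoid x) i), hmem _⟩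
        exact this
      calc dist (ψ none) (x i)
          = dist (ψ none) (ψ (some (Quotient.mk (xSetoid x) i))) := by rw [hx]
        _ = dist (none : Option (XQ x)) (some (Quotient.mk (xSetoid x) i)) := hψiso _ _
        _ = a i := rfl
  · -- one-point extension → saturation
    intro h L _ _ K φ hφ
    classical
    suffices H : ∀ m (K : Set L) (φ : K → X),
        (Kᶜ).ncard ≤ m →
        (∀ a b : K, dist (φ a) (φ b) = dist (a : L) (b : L)) →
        ∃ ψ : L → X, (∀ a b : L, dist (ψ a) (ψ b) = dist a b) ∧ ∀ a : K, ψ a = φ a by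
      exact H (Kᶜ).ncard K φ le_rfl hφ
    intro m
    induction m with
    | zero =>
      intro K φ hcard hφ
      have hempty : Kᶜ = ∅ := by
        rw [← Set.ncard_eq_zero (Set.toFinite _)]
        omega
      have hall : ∀ l : L, l ∈ K := by
        intro l
        by_contra hl
        have : l ∈ Kᶜ := hl
        rw [hempty] at this
        exact this
      refine ⟨fun l => φ ⟨l, hall l⟩, fun a b => hφ _ _, fun a => ?_⟩
      cases a; rfl
    | succ m ih =>
      intro K φ hcard hφ
      by_cases hc : (Kᶜ).ncard ≤ m
      · exact ih K φ hc hφ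
      · have hne : Kᶜ.Nonempty := by
          rw [Set.nonempty_iff_ne_empty]
          intro he
          rw [he, Set.ncard_empty] at hc
          omega
        obtain ⟨l, hl⟩ := hne
        haveI : Fintype K := Fintype.ofFinite _
        let e : Fin (Fintype.card K) ≃ K := (Fintype.equivFin K).symm
        obtain ⟨u, hu⟩ := h (Fintype.card K) (fun i => φ (e i)) (fun i => dist l (e i : L))
          (fun i => dist_nonneg)
          (by
            intro i j
            have hd : dist (φ (e i)) (φ (e j)) = dist (e i : L) (e j : L) := hφ _ _
            refine ⟨?_, ?_⟩
            · show |dist l (e i : L) - dist l (e j : L)| ≤ dist (φ (e i)) (φ (e j))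
              rw [hd, dist_comm l (e i : L), dist_comm l (e j : L)]
              exact abs_dist_sub_le _ _ _
            · show dist (φ (e i)) (φ (e j)) ≤ dist l (e i : L) + dist l (e j : L)
              rw [hd, dist_comm l (e i : L)]
              exact dist_triangle _ _ _)
        set K' : Set L := insert l K with hK'
        let φ' : K' → X := fun k => if hk : (k : L) ∈ K then φ ⟨k, hk⟩ else u
        have hφ'K : ∀ (k : L) (hk : k ∈ K), φ' ⟨k, Set.mem_insert_of_mem l hk⟩ = φ ⟨k, hk⟩ := by
          intro k hk
          simp only [φ', dif_pos hk]
        have hφ'l : ∀ (hl' : l ∈ K'), φ' ⟨l, hl'⟩ = u := by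
          intro hl'
          simp only [φ', dif_neg hl]
        have hul : ∀ (k : L) (hk : k ∈ K), dist u (φ ⟨k, hk⟩) = dist l k := by
          intro k hk
          have := hu (e.symm ⟨k, hk⟩)
          rwa [e.apply_symm_apply] at this
        have hφ' : ∀ a b : K', dist (φ' a) (φ' b) = dist (a : L) (b : L) := by
          rintro ⟨p, hp⟩ ⟨q, hq⟩
          rcases hp with rfl | hp
          · rcases hq with rfl | hq
            · rw [hφ'l (Set.mem_insert _ _)]; simp
            · rw [hφ'l (Set.mem_insert _ _), hφ'K q hq]
              exact hul q hq
          · rcases hq with rfl | hq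
            · rw [hφ'l (Set.mem_insert _ _), hφ'K p hp, dist_comm (φ ⟨p, hp⟩) u, dist_comm (p : L) q]
              exact hul p hp
            · rw [hφ'K p hp, hφ'K q hq]
              exact hφ ⟨p, hp⟩ ⟨q, hq⟩
        have hcard' : (K'ᶜ).ncard ≤ m := by
          have hKc : K'ᶜ = Kᶜ \ {l} := by
            rw [hK']
            ext y
            simp only [Set.mem_compl_iff, Set.mem_insert_iff, Set.mem_diff,
              Set.mem_singleton_iff, not_or]
            tauto
          rw [hKc]
          have := Set.ncard_diff_singleton_lt_of_mem hl (Set.toFinite _)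
          omega
        obtain ⟨ψ, hψiso, hψval⟩ := ih K' φ' hcard' hφ'
        refine ⟨ψ, hψiso, ?_⟩
        rintro ⟨k, hk⟩
        have := hψval ⟨k, Set.mem_insert_of_mem l hk⟩
        rw [this, hφ'K k hk]
end

section
/- Every separable metric space X satisfies density with probabilistic selection. Explicitly: fix a countable dense set {a₀,a₁,…} ⊆ X, let Aₙ = {a₀,…,aₙ} with inclusion maps νₙ : Aₙ → X, and define μₙ(x)(a) = ((d(x,Aₙ) + δₙ) ∸ d(x,a)) / Σ_{b∈Aₙ} ((d(x,Aₙ)+δₙ) ∸ d(x,b)), where d(x,Aₙ) = min_{i≤n} d(x,aᵢ), δₙ = min(2^{-n}, min{d(a,b) : a ≠ b ∈ Aₙ}), and u ∸ v = max(u−v, 0). Then each μₙ : X → PD(Aₙ) is continuous, and for every x ∈ X and every choice of aₙ ∈ Aₙ with μₙ(x)(aₙ) > 0, one has x = lim_{n→∞} aₙ. -/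
open Filter

variable {X : Type*} [MetricSpace X]

/-- `d(x, Aₙ) = min_{i ≤ n} d(x, aᵢ)`. -/
noncomputable def distToAn (a : ℕ → X) (n : ℕ) (x : X) : ℝ :=
  Finset.univ.inf' Finset.univ_nonempty (fun i : Fin (n + 1) => dist x (a i))

/-- `δₙ = min(2^{-n}, min{d(aᵢ,aⱼ) : aᵢ ≠ aⱼ, i,j ≤ n})` (just `2^{-n}` if all points
of `Aₙ` coincide). -/
noncomputable def deltaN (a : ℕ → X) (n : ℕ) : ℝ :=
  letI := Classical.dec
  if h : (Finset.univ.filter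
      (fun p : Fin (n + 1) × Fin (n + 1) => a p.1 ≠ a p.2)).Nonempty then
    min ((2 : ℝ) ^ (-(n : ℤ)))
      ((Finset.univ.filter
        (fun p : Fin (n + 1) × Fin (n + 1) => a p.1 ≠ a p.2)).inf' h
        (fun p => dist (a p.1) (a p.2)))
  else (2 : ℝ) ^ (-(n : ℤ))

/-- `u ∸ v = max (u − v) 0`. -/
noncomputable def truncSub (u v : ℝ) : ℝ := max (u - v) 0

/-- `μₙ(x)(a) = ((d(x,Aₙ)+δₙ) ∸ d(x,a)) / Σ_{b ∈ Aₙ} ((d(x,Aₙ)+δₙ) ∸ d(x,b))`. -/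
noncomputable def probSel (a : ℕ → X) (n : ℕ) (x : X) (i : Fin (n + 1)) : ℝ :=
  truncSub (distToAn a n x + deltaN a n) (dist x (a i)) /
    ∑ j : Fin (n + 1), truncSub (distToAn a n x + deltaN a n) (dist x (a j))

lemma deltaN_pos (a : ℕ → X) (n : ℕ) : 0 < deltaN a n := by
  classical
  rw [deltaN]
  have h2 : (0:ℝ) < (2:ℝ) ^ (-(n:ℤ)) := zpow_pos (by norm_num) _
  split_ifs with h
  · refine lt_min h2 ?_
    rw [Finset.lt_inf'_iff]
    intro p hp
    simp only [Finset.mem_filter] at hp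
    exact dist_pos.2 hp.2
  · exact h2

lemma deltaN_le (a : ℕ → X) (n : ℕ) : deltaN a n ≤ (2:ℝ) ^ (-(n:ℤ)) := by
  classical
  rw [deltaN]
  split_ifs with h
  · exact min_le_left _ _
  · exact le_rfl

lemma distToAn_le (a : ℕ → X) (n : ℕ) (x : X) (i : Fin (n + 1)) :
    distToAn a n x ≤ dist x (a i) :=
  Finset.inf'_le _ (Finset.mem_univ i)

lemma truncSub_nonneg (u v : ℝ) : 0 ≤ truncSub u v := le_max_right _ _

lemma sum_truncSub_pos (a : ℕ → X) (n : ℕ) (x : X) :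
    0 < ∑ j : Fin (n + 1),
      truncSub (distToAn a n x + deltaN a n) (dist x (a j)) := by
  obtain ⟨i, _, hi⟩ := Finset.exists_mem_eq_inf' (Finset.univ_nonempty)
    (fun i : Fin (n + 1) => dist x (a i))
  refine Finset.sum_pos' (fun j _ => truncSub_nonneg _ _) ⟨i, Finset.mem_univ i, ?_⟩
  have : distToAn a n x = dist x (a i) := hi
  rw [truncSub, this]
  simp only [lt_max_iff]
  left; linarith [deltaN_pos a n]

/-- Every separable metric space satisfies density with probabilistic selection, via
the explicit construction from a countable dense sequence: each `μₙ` is continuous,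
takes values in the probability distributions on `Aₙ = {a₀,…,aₙ}`, and every selection
of points of positive probability converges to `x`. -/
theorem separable_density_with_probabilistic_selection
    (a : ℕ → X) (ha : DenseRange a) :
    (∀ n : ℕ, Continuous (fun x => (fun i => probSel a n x i))) ∧
    (∀ (n : ℕ) (x : X), (∀ i, 0 ≤ probSel a n x i) ∧ ∑ i, probSel a n x i = 1) ∧
    (∀ (x : X) (s : (n : ℕ) → Fin (n + 1)),
      (∀ n, 0 < probSel a n x (s n)) →
      Tendsto (fun n => a (s n)) atTop (nhds x)) := by
  have hdc : ∀ n, Continuous (fun x : X => distToAn a n x) := by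
    intro n
    exact Continuous.finset_inf'_apply Finset.univ_nonempty
      (fun i _ => Continuous.dist continuous_id continuous_const)
  have htc : ∀ n (i : Fin (n+1)), Continuous
      (fun x : X => truncSub (distToAn a n x + deltaN a n) (dist x (a i))) := by
    intro n i
    exact Continuous.max (Continuous.sub ((hdc n).add continuous_const)
      (Continuous.dist continuous_id continuous_const)) continuous_const
  refine ⟨?_, ?_, ?_⟩
  · intro n
    refine continuous_pi fun i => Continuous.div (htc n i)
      (continuous_finset_sum _ fun j _ => htc n j) ?_
    intro x
    exact (sum_truncSub_pos a n x).ne'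
  · intro n x
    constructor
    · intro i
      exact div_nonneg (truncSub_nonneg _ _) (sum_truncSub_pos a n x).le
    · simp only [probSel]
      rw [← Finset.sum_div]
      exact div_self (sum_truncSub_pos a n x).ne'
  · intro x s hs
    rw [Metric.tendsto_atTop]
    intro ε hε
    obtain ⟨i, hi⟩ := ha.exists_dist_lt x (by linarith : (0:ℝ) < ε / 3)
    obtain ⟨M, hM⟩ := exists_pow_lt_of_lt_one (by linarith : (0:ℝ) < ε / 3)
      (by norm_num : (1/2 : ℝ) < 1)
    refine ⟨max i M, fun n hn => ?_⟩
    have hin : i ≤ n := le_trans (le_max_left _ _) hn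
    have hMn : M ≤ n := le_trans (le_max_right _ _) hn
    -- positivity gives dist x (a (s n)) < distToAn + deltaN
    have h1 : dist x (a (s n)) < distToAn a n x + deltaN a n := by
      have hnum : 0 < truncSub (distToAn a n x + deltaN a n) (dist x (a (s n))) := by
        by_contra h
        push_neg at h
        have hz : truncSub (distToAn a n x + deltaN a n) (dist x (a (s n))) = 0 :=
          le_antisymm h (truncSub_nonneg _ _)
        have hp := hs n
        rw [probSel, hz, zero_div] at hp
        exact lt_irrefl 0 hp
      rw [truncSub, lt_max_iff] at hnum
      rcases hnum with h | h
      · linarith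
      · exact absurd h (lt_irrefl 0)
    have h2 : distToAn a n x ≤ dist x (a i) := by
      have := distToAn_le a n x ⟨i, Nat.lt_succ_of_le hin⟩
      simpa using this
    have h3 : deltaN a n ≤ (1/2 : ℝ) ^ M := by
      refine le_trans (deltaN_le a n) ?_
      have : (2:ℝ) ^ (-(n:ℤ)) ≤ (2:ℝ) ^ (-(M:ℤ)) := by
        apply zpow_le_zpow_right₀ (by norm_num : (1:ℝ) ≤ 2)
        omega
      refine le_trans this ?_
      rw [zpow_neg, zpow_natCast, ← inv_pow]
      norm_num
    rw [dist_comm]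
    calc dist x (a (s n)) < distToAn a n x + deltaN a n := h1
      _ ≤ dist x (a i) + (1/2:ℝ)^M := add_le_add h2 h3
      _ < ε / 3 + ε / 3 := add_lt_add hi hM
      _ < ε := by linarith
end

section
/- The Urysohn space U is semiconvex: for every finite set A = {a₁,…,aₙ} and map ν : A → U there exists a continuous h_{A,ν} : PD(A) → U such that h_{A,ν}(δ_{aᵢ}) = ν(aᵢ) for the point mass δ_{aᵢ}, and whenever finite sets Aₙ, maps νₙ : Aₙ → U, distributions mₙ ∈ PD(Aₙ) and x ∈ U satisfy x = lim νₙ[Aₙ] mod mₙ, one has x = lim h_{Aₙ,νₙ}(mₙ). -/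
open Filter

/-- The space of probability distributions on a finite type `A`, as a subspace of
`A → ℝ`. -/
def PD (A : Type*) [Fintype A] : Type _ :=
  {m : A → ℝ // (∀ a, 0 ≤ m a) ∧ ∑ a, m a = 1}

instance (A : Type*) [Fintype A] : TopologicalSpace (PD A) :=
  instTopologicalSpaceSubtype

/-- The point mass at `a`. -/
noncomputable def pointMass {A : Type*} [Fintype A] [DecidableEq A] (a : A) : PD A :=
  ⟨fun b => if b = a then 1 else 0,
    fun b => by dsimp only; split <;> norm_num,
    by simp⟩

theorem FinitelySaturated.nonempty {U : Type*} [MetricSpace U] (hU : FinitelySaturated U) :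
    Nonempty U := by
  obtain ⟨ψ, -, -⟩ := hU PUnit inferInstance inferInstance ∅
    (fun p => absurd p.2 (Set.notMem_empty _)) (fun a => absurd a.2 (Set.notMem_empty _))
  exact ⟨ψ PUnit.unit⟩

theorem extendIso (U : Type*) [MetricSpace U] [CompleteSpace U] (hU : FinitelySaturated U)
    (X : Type) [MetricSpace X] [Nonempty X] [TopologicalSpace.SeparableSpace X]
    (K : Set X) (hK : K.Finite) (φ : K → U)
    (hφ : ∀ a b : K, dist (φ a) (φ b) = dist (a : X) (b : X)) :
    ∃ ψ : X → U, Isometry ψ ∧ ∀ p : K, ψ (p : X) = φ p := by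
  have hne : Nonempty U := hU.nonempty
  obtain ⟨u, hu⟩ := TopologicalSpace.exists_dense_seq X
  letI := hK.fintype
  set k := Fintype.card K with hk
  obtain ⟨c⟩ : Nonempty (Fin k ≃ K) := ⟨(Fintype.equivFin K).symm⟩
  set y : ℕ → X := fun i => if h : i < k then (c ⟨i, h⟩ : X) else u (i - k) with hy
  have hyk : ∀ i (h : i < k), y i = (c ⟨i, h⟩ : X) := fun i h => dif_pos h
  have hyu : ∀ j : ℕ, y (j + k) = u j := by
    intro j
    simp only [hy]
    rw [dif_neg (by omega)]
    congr 1
    omega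
  -- the invariant
  set Inv : ℕ → (ℕ → U) → Prop := fun n f =>
    (∀ i j : ℕ, (i ≤ n ∨ i < k) → (j ≤ n ∨ j < k) → dist (f i) (f j) = dist (y i) (y j)) ∧
    (∀ i (h : i < k), f i = φ (c ⟨i, h⟩)) with hInv
  have inv0 : Inv 0 (fun i => if h : i < k then φ (c ⟨i, h⟩) else Classical.arbitrary U) := by
    constructor
    · intro i j hi hj
      by_cases h1 : i < k <;> by_cases h2 : j < k
      · simp only [dif_pos h1, dif_pos h2, hφ, hyk i h1, hyk j h2]
      · omega
      · omega
      · have hi0 : i = 0 := by omega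
        have hj0 : j = 0 := by omega
        subst hi0; subst hj0; simp
    · intro i h; simp [dif_pos h]
  have step : ∀ n (f : ℕ → U), Inv n f →
      ∃ f', Inv (n+1) f' ∧ ∀ i, (i ≤ n ∨ i < k) → f' i = f i := by
    intro n f hf
    obtain ⟨h1, h2⟩ := hf
    set S : Set X := y '' {i | i ≤ n + 1 ∨ i < k} with hS
    have hSfin : S.Finite := Set.Finite.image y (((Set.finite_Iic (n+1)).union (Set.finite_Iio k)))
    letI : Fintype ↥S := hSfin.fintype
    have memS : ∀ i, (i ≤ n + 1 ∨ i < k) → y i ∈ S := fun i hi => ⟨i, hi, rfl⟩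
    set K' : Set ↥S := {p | ∃ i, (i ≤ n ∨ i < k) ∧ y i = (p : X)} with hK'
    set φ' : ↥K' → U := fun p => f (Classical.choose p.2) with hφ'
    have hφspec : ∀ p : ↥K', (Classical.choose p.2 ≤ n ∨ Classical.choose p.2 < k) ∧
        y (Classical.choose p.2) = ((p : ↥S) : X) := fun p => Classical.choose_spec p.2
    have hiso : ∀ p q : ↥K', dist (φ' p) (φ' q) = dist (p : ↥S) (q : ↥S) := by
      intro p q
      show dist (f _) (f _) = _
      rw [h1 _ _ (hφspec p).1 (hφspec q).1, (hφspec p).2, (hφspec q).2]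
      rfl
    obtain ⟨ψ, hψ1, hψ2⟩ := hU ↥S inferInstance inferInstance K' φ' hiso
    have agree : ∀ i (hi : i ≤ n ∨ i < k), ψ ⟨y i, memS i (by omega)⟩ = f i := by
      intro i hi
      have hp : (⟨y i, memS i (by omega)⟩ : ↥S) ∈ K' := ⟨i, hi, rfl⟩
      have := hψ2 ⟨_, hp⟩
      rw [this]
      show f (Classical.choose hp) = f i
      have hspec := Classical.choose_spec hp
      have : dist (f (Classical.choose hp)) (f i) = dist (y (Classical.choose hp)) (y i) :=
        h1 _ _ hspec.1 hi
      rw [hspec.2] at this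
      simpa [dist_eq_zero] using this
    refine ⟨fun i => if h : i ≤ n + 1 ∨ i < k then ψ ⟨y i, memS i h⟩ else f i, ⟨?_, ?_⟩, ?_⟩
    · intro i j hi hj
      dsimp only
      rw [dif_pos (by omega : i ≤ n + 1 ∨ i < k), dif_pos (by omega : j ≤ n + 1 ∨ j < k)]
      rw [hψ1]
      rfl
    · intro i h
      dsimp only
      rw [dif_pos (by omega : i ≤ n + 1 ∨ i < k), agree i (Or.inr h)]
      exact h2 i h
    · intro i hi
      dsimp only
      rw [dif_pos (by omega : i ≤ n + 1 ∨ i < k), agree i hi]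
  -- build the chain by recursion
  let F : ∀ n : ℕ, {f : ℕ → U // Inv n f} := fun n => Nat.rec
    ⟨fun i => if h : i < k then φ (c ⟨i, h⟩) else Classical.arbitrary U, inv0⟩
    (fun n prev => ⟨(step n prev.1 prev.2).choose, (step n prev.1 prev.2).choose_spec.1⟩) n
  have Fsucc : ∀ n i, (i ≤ n ∨ i < k) → (F (n+1)).1 i = (F n).1 i := by
    intro n i hi
    exact ((step n (F n).1 (F n).2).choose_spec).2 i hi
  set g : ℕ → U := fun i => (F i).1 i with hg
  have gco : ∀ n i, i ≤ n → (F n).1 i = g i := by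
    intro n
    induction n with
    | zero => intro i hi; have : i = 0 := by omega
              subst this; rfl
    | succ n ih =>
      intro i hi
      rcases Nat.lt_or_ge i (n+1) with h | h
      · rw [Fsucc n i (Or.inl (by omega))]; exact ih i (by omega)
      · have : i = n + 1 := by omega
        subst this; rfl
  have gdist : ∀ i j, dist (g i) (g j) = dist (y i) (y j) := by
    intro i j
    have := (F (max i j)).2.1 i j (Or.inl (le_max_left _ _)) (Or.inl (le_max_right _ _))
    rwa [gco (max i j) i (le_max_left _ _), gco (max i j) j (le_max_right _ _)] at this
  have gK : ∀ i (h : i < k), g i = φ (c ⟨i, h⟩) := fun i h => (F i).2.2 i h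
  -- extend g to all of X by density and completeness
  have happrox : ∀ (x : X) (nn : ℕ), ∃ i, dist x (y i) < 1 / (nn + 1) := by
    intro x nn
    have hpos : (0:ℝ) < 1 / (nn + 1) := by positivity
    obtain ⟨j, hj⟩ := hu.exists_dist_lt x hpos
    exact ⟨j + k, by rwa [hyu j]⟩
  set r : X → ℕ → ℕ := fun x nn => (happrox x nn).choose with hr
  have hrspec : ∀ (x : X) (nn : ℕ), dist x (y (r x nn)) < 1 / (nn + 1) :=
    fun x nn => (happrox x nn).choose_spec
  have hytend : ∀ x : X, Tendsto (fun nn => y (r x nn)) atTop (nhds x) := by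
    intro x
    rw [tendsto_iff_dist_tendsto_zero]
    refine squeeze_zero (fun nn => dist_nonneg) (fun nn => ?_) tendsto_one_div_add_atTop_nhds_zero_nat
    rw [dist_comm]
    exact (hrspec x nn).le
  have hcauchy : ∀ x : X, CauchySeq (fun nn => g (r x nn)) := by
    intro x
    apply cauchySeq_of_le_tendsto_0 (fun nn : ℕ => (2:ℝ) / (nn + 1))
    · intro a b N ha hb
      rw [gdist]
      calc dist (y (r x a)) (y (r x b)) ≤ dist (y (r x a)) x + dist x (y (r x b)) :=
            dist_triangle _ _ _
        _ ≤ 1 / (a + 1) + 1 / (b + 1) := by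
            rw [dist_comm (y (r x a)) x]
            exact add_le_add (hrspec x a).le (hrspec x b).le
        _ ≤ 1 / (N + 1) + 1 / (N + 1) := by
            have h1 : ((N:ℝ)) + 1 ≤ (a:ℝ) + 1 := by exact_mod_cast Nat.succ_le_succ ha
            have h2 : ((N:ℝ)) + 1 ≤ (b:ℝ) + 1 := by exact_mod_cast Nat.succ_le_succ hb
            gcongr <;> positivity
        _ = 2 / (N + 1) := by ring
    · have : Tendsto (fun nn : ℕ => 2 * (1 / (nn + 1) : ℝ)) atTop (nhds (2 * 0)) :=
        tendsto_const_nhds.mul tendsto_one_div_add_atTop_nhds_zero_nat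
      simpa [div_eq_mul_inv] using this
  have hlim : ∀ x : X, ∃ l : U, Tendsto (fun nn => g (r x nn)) atTop (nhds l) :=
    fun x => cauchySeq_tendsto_of_complete (hcauchy x)
  set ψ : X → U := fun x => (hlim x).choose with hψ
  have hψtend : ∀ x : X, Tendsto (fun nn => g (r x nn)) atTop (nhds (ψ x)) :=
    fun x => (hlim x).choose_spec
  have hψiso : ∀ x x' : X, dist (ψ x) (ψ x') = dist x x' := by
    intro x x'
    have h1 : Tendsto (fun nn => dist (g (r x nn)) (g (r x' nn))) atTop
        (nhds (dist (ψ x) (ψ x'))) := (hψtend x).dist (hψtend x')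
    have h2 : Tendsto (fun nn => dist (g (r x nn)) (g (r x' nn))) atTop
        (nhds (dist x x')) := by
      have := (hytend x).dist (hytend x')
      simpa only [gdist] using this
    exact tendsto_nhds_unique h1 h2
  have hψy : ∀ i : ℕ, ψ (y i) = g i := by
    intro i
    have h1 : Tendsto (fun nn => dist (g (r (y i) nn)) (g i)) atTop
        (nhds (dist (ψ (y i)) (g i))) := (hψtend (y i)).dist tendsto_const_nhds
    have h2 : Tendsto (fun nn => dist (g (r (y i) nn)) (g i)) atTop (nhds 0) := by
      have := (hytend (y i)).dist (tendsto_const_nhds : Tendsto (fun _ : ℕ => y i) atTop (nhds (y i)))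
      simp only [gdist, dist_self] at this ⊢
      simpa using this
    have := tendsto_nhds_unique h1 h2
    exact dist_eq_zero.1 this
  refine ⟨ψ, Isometry.of_dist_eq hψiso, ?_⟩
  intro p
  set j : Fin k := c.symm p with hj
  have hyj : y (j : ℕ) = (p : X) := by
    rw [hyk (j : ℕ) j.2]
    congr 1
    rw [show (⟨(j : ℕ), j.2⟩ : Fin k) = j from rfl, hj, c.apply_symm_apply]
  rw [← hyj, hψy, gK (j : ℕ) j.2]
  congr 1
  rw [show (⟨(j : ℕ), j.2⟩ : Fin k) = j from rfl, hj, c.apply_symm_apply]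


theorem key (U : Type*) [MetricSpace U] [CompleteSpace U] (hU : FinitelySaturated U)
    (A : Type) [Fintype A] (ν : A → U) :
    ∃ h : PD A → U, Continuous h ∧
      (∀ (inst : DecidableEq A) (a : A), h (@pointMass A _ inst a) = ν a) ∧
      (∀ (m : PD A) (b : A), dist (h m) (ν b) ≤ ∑ a, m.1 a * dist (ν a) (ν b)) := by
  classical
  set X : Type := A → ℝ with hX
  set e : A → X := fun a b => dist (ν a) (ν b) with he'
  have he : ∀ a a', dist (e a) (e a') = dist (ν a) (ν a') := by
    intro a a'
    apply le_antisymm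
    · refine (dist_pi_le_iff dist_nonneg).2 fun b => ?_
      rw [Real.dist_eq]
      exact abs_dist_sub_le _ _ _
    · have := dist_le_pi_dist (e a) (e a') a'
      simpa [he', Real.dist_eq, abs_of_nonneg dist_nonneg] using this
  set K : Set X := Set.range e with hK'
  set φ : ↥K → U := fun p => ν (Classical.choose p.2) with hφ'
  have hφspec : ∀ p : ↥K, e (Classical.choose p.2) = (p : X) := fun p => Classical.choose_spec p.2
  have hφ : ∀ p q : ↥K, dist (φ p) (φ q) = dist (p : X) (q : X) := by
    intro p q
    show dist (ν _) (ν _) = _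
    rw [← he, hφspec p, hφspec q]
  obtain ⟨ψ, hψiso, hψK⟩ := extendIso U hU X K (Set.finite_range e) φ hφ
  have hψe : ∀ a : A, ψ (e a) = ν a := by
    intro a
    have hmem : e a ∈ K := ⟨a, rfl⟩
    have := hψK ⟨e a, hmem⟩
    rw [this]
    show ν (Classical.choose hmem) = ν a
    have h0 : dist (ν (Classical.choose hmem)) (ν a) = 0 := by
      rw [← he, hφspec ⟨e a, hmem⟩, dist_self]
    exact dist_eq_zero.1 h0
  set g : PD A → X := fun m => ∑ a, m.1 a • e a with hg
  have hgcont : Continuous g := by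
    apply continuous_finset_sum
    intro a _
    exact ((continuous_apply a).comp continuous_subtype_val).smul continuous_const
  refine ⟨fun m => ψ (g m), (hψiso.continuous).comp hgcont, ?_, ?_⟩
  · intro inst a
    have : g (@pointMass A _ inst a) = e a := by
      simp only [hg, pointMass, ite_smul, one_smul, zero_smul]
      rw [Finset.sum_ite_eq' Finset.univ a (fun b => e b)]
      simp
    show ψ (g (@pointMass A _ inst a)) = ν a
    rw [this, hψe]
  · intro m b
    have hgb : dist (g m) (e b) ≤ ∑ a, m.1 a * dist (ν a) (ν b) := by
      have hsub : g m - e b = ∑ a, m.1 a • (e a - e b) := by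
        simp only [smul_sub, Finset.sum_sub_distrib, hg]
        congr 1
        rw [← Finset.sum_smul, m.2.2, one_smul]
      rw [dist_eq_norm, hsub]
      refine (norm_sum_le _ _).trans ?_
      apply Finset.sum_le_sum
      intro a _
      rw [norm_smul, Real.norm_of_nonneg (m.2.1 a), ← dist_eq_norm, he]
    calc dist (ψ (g m)) (ν b) = dist (ψ (g m)) (ψ (e b)) := by rw [hψe]
      _ = dist (g m) (e b) := hψiso.dist_eq _ _
      _ ≤ _ := hgb

/-- The Urysohn space (any finitely saturated complete separable metric space) is
semiconvex: there is an assignment `(A, ν) ↦ h_{A,ν} : PD A → U`, continuous, sending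
point masses `δ_a` to `ν a`, such that whenever `x = lim νₙ[Aₙ] mod mₙ`
(every selection of positive probability converges to `x`), also
`x = lim h_{Aₙ,νₙ}(mₙ)`. -/
theorem urysohn_semiconvex
    (U : Type*) [MetricSpace U] [CompleteSpace U] [TopologicalSpace.SeparableSpace U]
    (hU : FinitelySaturated U) :
    ∃ H : (A : Type) → [inst : Fintype A] → (A → U) → PD A → U,
      (∀ (A : Type) [Fintype A] [DecidableEq A] (ν : A → U),
        Continuous (H A ν) ∧ ∀ a : A, H A ν (pointMass a) = ν a) ∧
      (∀ (A : ℕ → Type) [inst : ∀ n, Fintype (A n)]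
        (ν : ∀ n, A n → U) (m : ∀ n, PD (A n)) (x : U),
        (∀ s : (n : ℕ) → A n, (∀ n, 0 < (m n).1 (s n)) →
          Tendsto (fun n => ν n (s n)) atTop (nhds x)) →
        Tendsto (fun n => H (A n) (ν n) (m n)) atTop (nhds x)) := by
  classical
  refine ⟨fun A inst ν => (@key U _ _ hU A inst ν).choose, ?_, ?_⟩
  · intro A instF instD ν
    obtain ⟨hc, hpm, -⟩ := (@key U _ _ hU A instF ν).choose_spec
    exact ⟨hc, fun a => hpm instD a⟩
  · intro A instF ν m x hyp
    have hpos : ∀ n, ∃ a, 0 < (m n).1 a := by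
      intro n
      by_contra h
      push_neg at h
      have hz : ∀ a, (m n).1 a = 0 := fun a => le_antisymm (h a) ((m n).2.1 a)
      have hsum := (m n).2.2
      rw [Finset.sum_congr rfl (fun a _ => hz a)] at hsum
      simp at hsum
    set t : ∀ n, A n := fun n => (hpos n).choose with ht
    have htpos : ∀ n, 0 < (m n).1 (t n) := fun n => (hpos n).choose_spec
    rw [Metric.tendsto_atTop]
    intro ε hε
    set s : ∀ n, A n := fun n =>
      if h : ∃ a, 0 < (m n).1 a ∧ ε / 3 ≤ dist (ν n a) x then h.choose else t n with hs
    have hspos : ∀ n, 0 < (m n).1 (s n) := by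
      intro n
      by_cases h : ∃ a, 0 < (m n).1 a ∧ ε / 3 ≤ dist (ν n a) x
      · simp only [hs, dif_pos h]; exact h.choose_spec.1
      · simp only [hs, dif_neg h]; exact htpos n
    have hstend := hyp s hspos
    rw [Metric.tendsto_atTop] at hstend
    obtain ⟨N, hN⟩ := hstend (ε / 3) (by linarith)
    refine ⟨N, fun n hn => ?_⟩
    have hall : ∀ a, 0 < (m n).1 a → dist (ν n a) x < ε / 3 := by
      intro a ha
      by_contra hcon
      push_neg at hcon
      have hex : ∃ b, 0 < (m n).1 b ∧ ε / 3 ≤ dist (ν n b) x := ⟨a, ha, hcon⟩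
      have hge : ε / 3 ≤ dist (ν n (s n)) x := by
        simp only [hs, dif_pos hex]
        exact hex.choose_spec.2
      exact absurd (hN n hn) (not_lt.2 hge)
    obtain ⟨-, -, hbd⟩ := (@key U _ _ hU (A n) (instF n) (ν n)).choose_spec
    have h1 : dist ((@key U _ _ hU (A n) (instF n) (ν n)).choose (m n)) (ν n (t n)) ≤
        2 * ε / 3 := by
      refine (hbd (m n) (t n)).trans ?_
      have hterm : ∀ a ∈ Finset.univ, (m n).1 a * dist (ν n a) (ν n (t n)) ≤
          (m n).1 a * (2 * ε / 3) := by
        intro a _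
        rcases lt_or_eq_of_le ((m n).2.1 a) with hlt | heq
        · refine mul_le_mul_of_nonneg_left ?_ ((m n).2.1 a)
          calc dist (ν n a) (ν n (t n)) ≤ dist (ν n a) x + dist x (ν n (t n)) :=
                dist_triangle _ _ _
            _ ≤ ε / 3 + ε / 3 := by
                refine add_le_add (hall a hlt).le ?_
                rw [dist_comm]
                exact (hall (t n) (htpos n)).le
            _ ≤ 2 * ε / 3 := by linarith
        · rw [← heq]
          simp
      refine (Finset.sum_le_sum hterm).trans ?_
      rw [← Finset.sum_mul, (m n).2.2, one_mul]
    have h2 : dist (ν n (t n)) x < ε / 3 := hall (t n) (htpos n)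
    calc dist ((@key U _ _ hU (A n) (instF n) (ν n)).choose (m n)) x ≤
        dist ((@key U _ _ hU (A n) (instF n) (ν n)).choose (m n)) (ν n (t n)) +
          dist (ν n (t n)) x := dist_triangle _ _ _
      _ < 2 * ε / 3 + ε / 3 := add_lt_add_of_le_of_lt h1 h2
      _ = ε := by ring
end

section
/- If X and Y are sequential Hausdorff topological spaces each admitting a countable pseudobase of closed sets, then the space C(X,Y) of continuous functions with the topology of continuous convergence (the sequentialization where fₙ → f iff fₙ(xₙ) → f(x) whenever xₙ → x) also admits a countable pseudobase of closed sets: the nonempty sets of the form {f ∈ C(X,Y) : f[pₖ] ⊆ qₖ for k = 1,…,n}, where p₁,…,pₙ are closed pseudobase elements of X and q₁,…,qₙ are closed pseudobase elements of Y, form such a pseudobase; moreover each such set is closed and C(X,Y) is Hausdorff. -/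
open Filter

/-- The set of continuous functions from `X` to `Y` (a type synonym carrying no
topology by default). -/
def CFun (X Y : Type*) [TopologicalSpace X] [TopologicalSpace Y] :=
  {f : X → Y // Continuous f}

/-- Continuous convergence of a sequence of continuous functions:
`fₙ → f` iff `fₙ(xₙ) → f(x)` whenever `xₙ → x`. -/
def ContConvSeq {X Y : Type*} [TopologicalSpace X] [TopologicalSpace Y]
    (F : ℕ → CFun X Y) (f : CFun X Y) : Prop :=
  ∀ (x : X) (u : ℕ → X), Tendsto u atTop (nhds x) →
    Tendsto (fun n => (F n).1 (u n)) atTop (nhds (f.1 x))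

/-- The sequentialization of the topology of continuous convergence on `CFun X Y`:
a set is open iff it is sequentially open for continuous convergence. -/
def ccTop (X Y : Type*) [TopologicalSpace X] [TopologicalSpace Y] :
    TopologicalSpace (CFun X Y) where
  IsOpen O := ∀ (F : ℕ → CFun X Y) (f : CFun X Y),
    ContConvSeq F f → f ∈ O → ∀ᶠ n in atTop, F n ∈ O
  isOpen_univ := fun _ _ _ _ => Eventually.of_forall fun _ => trivial
  isOpen_inter := fun s t hs ht F f hc hf =>
    (hs F f hc hf.1).and (ht F f hc hf.2)
  isOpen_sUnion := fun S h F f hc hf => by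
    obtain ⟨t, htS, hft⟩ := hf
    exact (h t htS F f hc hft).mono fun n hn => ⟨t, htS, hn⟩

open scoped Topology

section Aux

variable {X Y : Type*} [TopologicalSpace X] [TopologicalSpace Y]

lemma isOpen_ccTop_iff {s : Set (CFun X Y)} :
    IsOpen[ccTop X Y] s ↔ ∀ (F : ℕ → CFun X Y) (f : CFun X Y),
      ContConvSeq F f → f ∈ s → ∀ᶠ n in atTop, F n ∈ s := Iff.rfl

lemma ContConvSeq.ptwise {F : ℕ → CFun X Y} {f : CFun X Y}
    (h : ContConvSeq F f) (z : X) :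
    Tendsto (fun n => (F n).1 z) atTop (nhds (f.1 z)) :=
  h z (fun _ => z) tendsto_const_nhds

lemma point_open (z : X) {V : Set Y} (hV : IsOpen V) :
    IsOpen[ccTop X Y] {h : CFun X Y | h.1 z ∈ V} := by
  rw [isOpen_ccTop_iff]
  intro F f hc hf
  exact hc.ptwise z (hV.mem_nhds hf)

lemma nseq_open (x : X) (u : ℕ → X) (hu : Tendsto u atTop (nhds x))
    {V : Set Y} (hV : IsOpen V) :
    IsOpen[ccTop X Y] {h : CFun X Y | h.1 x ∈ V ∧ ∀ m, h.1 (u m) ∈ V} := by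
  classical
  rw [isOpen_ccTop_iff]
  intro G g hGg hg
  have h1 : ∀ᶠ m in atTop, (G m).1 x ∈ V := hGg.ptwise x (hV.mem_nhds hg.1)
  have h2 : ∀ᶠ m in atTop, ∀ j, (G m).1 (u j) ∈ V := by
    by_contra hcon
    obtain ⟨φ, hφ, hbad⟩ := extraction_of_frequently_atTop (not_eventually.mp hcon)
    choose j hj using fun i => not_forall.mp (hbad i)
    by_cases hb : ∃ j₀, {i | j i = j₀}.Infinite
    · obtain ⟨j₀, hinf⟩ := hb
      have hpt : ∀ᶠ m in atTop, (G m).1 (u j₀) ∈ V :=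
        hGg.ptwise (u j₀) (hV.mem_nhds (hg.2 j₀))
      obtain ⟨M, hM⟩ := eventually_atTop.mp hpt
      obtain ⟨i, himem, hMi⟩ := hinf.exists_gt M
      have : (G (φ i)).1 (u j₀) ∈ V := hM (φ i) (hMi.le.trans hφ.le_apply)
      rw [← himem] at this
      exact hj i this
    · push_neg at hb
      replace hb : ∀ j₀, {i | j i = j₀}.Finite := hb
      have hjto : Tendsto j atTop atTop := by
        rw [tendsto_atTop]
        intro b
        rw [← Nat.cofinite_eq_atTop, eventually_cofinite]
        refine Set.Finite.subset ((Set.finite_lt_nat b).biUnion fun j₀ _ => hb j₀) ?_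
        intro i hi
        simp only [Set.mem_setOf_eq, not_le] at hi
        exact Set.mem_biUnion hi rfl
      have huj : Tendsto (fun i => u (j i)) atTop (nhds x) := hu.comp hjto
      set w : ℕ → X := fun m => if h : ∃ i, φ i = m then u (j h.choose) else x with hw
      have hwφ : ∀ i, w (φ i) = u (j i) := by
        intro i
        have hex : ∃ i', φ i' = φ i := ⟨i, rfl⟩
        have hch : hex.choose = i := hφ.injective hex.choose_spec
        simp only [hw, dif_pos hex, hch]
      have hwx : Tendsto w atTop (nhds x) := by
        rw [tendsto_nhds]
        intro U hU hxU
        obtain ⟨I, hI⟩ := eventually_atTop.mp (huj (hU.mem_nhds hxU))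
        refine eventually_atTop.mpr ⟨φ I, fun m hm => ?_⟩
        by_cases hex : ∃ i, φ i = m
        · have hc := hex.choose_spec
          have hIc : I ≤ hex.choose := by
            by_contra hlt
            push_neg at hlt
            have := hφ hlt
            omega
          show w m ∈ U
          rw [hw]
          simp only [dif_pos hex]
          exact hI _ hIc
        · show w m ∈ U
          rw [hw]
          simp only [dif_neg hex]
          exact hxU
      have hGw := hGg x w hwx
      obtain ⟨M, hM⟩ := eventually_atTop.mp (hGw (hV.mem_nhds hg.1))
      have h3 := hM (φ M) hφ.le_apply
      simp only [] at h3
      rw [hwφ M] at h3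
      exact hj M h3
  exact (h1.and h2).mono fun m hm => ⟨hm.1, hm.2⟩


lemma weak_crux {P : Set (Set X)} {Q : Set (Set Y)}
    (hPc : P.Countable) (hP : IsPseudobase P)
    (hQc : Q.Countable) (hQ : IsPseudobase Q)
    (f : CFun X Y) (F : ℕ → CFun X Y)
    (hF : Tendsto F atTop (@nhds _ (ccTop X Y) f))
    (x : X) (v : ℕ → X) (hv : Tendsto v atTop (nhds x))
    {V : Set Y} (hV : IsOpen V) (hfx : f.1 x ∈ V) :
    ∃ p ∈ P, ∃ q ∈ Q, q ⊆ V ∧ f.1 '' p ⊆ q ∧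
      (∀ᶠ n in atTop, (F n).1 '' p ⊆ q) ∧ ∀ᶠ j in atTop, v j ∈ p := by
  classical
  set Pt : Set (Set X) := {p | p ∈ P ∧ ∀ᶠ j in atTop, v j ∈ p} with hPtdef
  have hPtc : Pt.Countable := Set.Countable.mono (fun p hp => hp.1) hPc
  have hPtne : Pt.Nonempty := by
    obtain ⟨p, hpP, _, _, htail⟩ := hP.2.2 x v hv Set.univ isOpen_univ trivial
    exact ⟨p, hpP, htail⟩
  obtain ⟨e, he⟩ := hPtc.exists_eq_range hPtne
  have heP : ∀ i, e i ∈ Pt := fun i => he ▸ Set.mem_range_self i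
  set r : ℕ → Set X := fun k => Nat.rec (e 0) (fun k rk => rk ∩ e (k + 1)) k with hrdef
  have hr0 : r 0 = e 0 := rfl
  have hrsucc : ∀ k, r (k + 1) = r k ∩ e (k + 1) := fun k => rfl
  have hrPt : ∀ k, r k ∈ Pt := by
    intro k
    induction k with
    | zero => exact heP 0
    | succ k ih =>
      have hev : ∀ᶠ jj in atTop, v jj ∈ r k ∩ e (k + 1) :=
        (ih.2.and (heP (k + 1)).2).mono fun jj h => ⟨h.1, h.2⟩
      have hne : (r k ∩ e (k + 1)).Nonempty := by
        obtain ⟨jj, hjj⟩ := hev.exists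
        exact ⟨v jj, hjj⟩
      refine ⟨?_, by rw [hrsucc]; exact hev⟩
      rw [hrsucc]
      exact hP.2.1 _ ih.1 _ (heP (k + 1)).1 hne
  have hranti : Antitone r := antitone_nat_of_succ_le fun k => by
    rw [hrsucc]; exact Set.inter_subset_left
  have hrO : ∀ O : Set X, IsOpen O → x ∈ O → ∃ k, r k ⊆ O := by
    intro O hO hxO
    obtain ⟨p, hpP, _, hpO, htail⟩ := hP.2.2 x v hv O hO hxO
    have hmem : p ∈ Pt := ⟨hpP, htail⟩
    rw [he] at hmem
    obtain ⟨k, hk⟩ := hmem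
    have hrek : r k ⊆ e k := by
      cases k with
      | zero => exact subset_of_eq hr0
      | succ k => rw [hrsucc]; exact Set.inter_subset_right
    subst hk
    exact ⟨k, hrek.trans hpO⟩
  set QV : Set (Set Y) := {q | q ∈ Q ∧ q ⊆ V} with hQVdef
  have hQVc : QV.Countable := Set.Countable.mono (fun q hq => hq.1) hQc
  have hQVne : QV.Nonempty := by
    obtain ⟨q, hqQ, _, hqV, _⟩ :=
      hQ.2.2 (f.1 x) (fun _ => f.1 x) tendsto_const_nhds V hV hfx
    exact ⟨q, hqQ, hqV⟩
  obtain ⟨ql, hql⟩ := hQVc.exists_eq_range hQVne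
  have hqlQV : ∀ l, ql l ∈ QV := fun l => hql ▸ Set.mem_range_self l
  by_contra hcon
  have hwit : ∀ k : ℕ, ∃ z y, z ∈ r k ∧ y ∉ ql (Nat.unpair k).1 ∧
      (y = f.1 z ∨ ∃ n, k ≤ n ∧ y = (F n).1 z) := by
    intro k
    by_cases hfq : f.1 '' r k ⊆ ql (Nat.unpair k).1
    · have hnotev : ¬ ∀ᶠ n in atTop, (F n).1 '' r k ⊆ ql (Nat.unpair k).1 := by
        intro hev
        exact hcon ⟨r k, (hrPt k).1, ql (Nat.unpair k).1, (hqlQV _).1,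
          (hqlQV _).2, hfq, hev, (hrPt k).2⟩
      obtain ⟨n, hkn, hbadn⟩ := frequently_atTop.mp (not_eventually.mp hnotev) k
      obtain ⟨y, hyim, hy⟩ := Set.not_subset.mp hbadn
      obtain ⟨z, hz, rfl⟩ := hyim
      exact ⟨z, _, hz, hy, Or.inr ⟨n, hkn, rfl⟩⟩
    · obtain ⟨y, hyim, hy⟩ := Set.not_subset.mp hfq
      obtain ⟨z, hz, rfl⟩ := hyim
      exact ⟨z, _, hz, hy, Or.inl rfl⟩
  choose z y hz hy hcase using hwit
  have hzx : Tendsto z atTop (nhds x) := by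
    rw [tendsto_nhds]
    intro O hO hxO
    obtain ⟨k₀, hk₀⟩ := hrO O hO hxO
    exact eventually_atTop.mpr ⟨k₀, fun k hk => hk₀ (hranti hk (hz k))⟩
  have hyx : Tendsto y atTop (nhds (f.1 x)) := by
    rw [tendsto_nhds]
    intro V' hV' hfxV'
    have hfz : Tendsto (fun k => f.1 (z k)) atTop (nhds (f.1 x)) :=
      (f.2.tendsto x).comp hzx
    obtain ⟨K₁, hK₁⟩ := eventually_atTop.mp (hfz (hV'.mem_nhds hfxV'))
    have hu' : Tendsto (fun m => z (m + K₁)) atTop (nhds x) :=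
      hzx.comp (tendsto_add_atTop_nat K₁)
    have hNopen := nseq_open x (fun m => z (m + K₁)) hu' hV'
    have hfN : f ∈ {h : CFun X Y | h.1 x ∈ V' ∧ ∀ m, h.1 (z (m + K₁)) ∈ V'} :=
      ⟨hfxV', fun m => hK₁ _ (Nat.le_add_left _ _)⟩
    letI : TopologicalSpace (CFun X Y) := ccTop X Y
    have hFN := hF (hNopen.mem_nhds hfN)
    obtain ⟨N₂, hN₂⟩ := eventually_atTop.mp hFN
    refine eventually_atTop.mpr ⟨max K₁ N₂, fun k hk => ?_⟩
    rcases hcase k with hca | ⟨n, hkn, hcb⟩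
    · show y k ∈ V'
      rw [hca]
      exact hK₁ k (le_of_max_le_left hk)
    · show y k ∈ V'
      rw [hcb]
      have hFn := hN₂ n (le_trans (le_of_max_le_right hk) hkn)
      have h5 := hFn.2 (k - K₁)
      simp only [Nat.sub_add_cancel (le_of_max_le_left hk)] at h5
      exact h5
  obtain ⟨q, hqQ, hfxq, hqV, htail⟩ := hQ.2.2 (f.1 x) y hyx V hV hfx
  have hqQV : q ∈ QV := ⟨hqQ, hqV⟩
  rw [hql] at hqQV
  obtain ⟨l₀, hl₀⟩ := hqQV
  obtain ⟨T, hT⟩ := eventually_atTop.mp htail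
  have h1 : y (Nat.pair l₀ T) ∈ q := hT _ (Nat.right_le_pair l₀ T)
  have h2 := hy (Nat.pair l₀ T)
  rw [Nat.unpair_pair] at h2
  rw [hl₀] at h2
  exact h2 h1


def pbFamily (P : Set (Set X)) (Q : Set (Set Y)) : Set (Set (CFun X Y)) :=
  {S | S.Nonempty ∧ ∃ (n : ℕ) (p : Fin n → Set X) (q : Fin n → Set Y),
      (∀ k, p k ∈ P) ∧ (∀ k, q k ∈ Q) ∧
      S = {f : CFun X Y | ∀ k, f.1 '' p k ⊆ q k}}

lemma pbFamily_countable {P : Set (Set X)} {Q : Set (Set Y)}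
    (hPc : P.Countable) (hQc : Q.Countable) : (pbFamily P Q).Countable := by
  have hsub : pbFamily P Q ⊆ ⋃ n : ℕ,
      (fun pq : (Fin n → Set X) × (Fin n → Set Y) =>
        {f : CFun X Y | ∀ k, f.1 '' pq.1 k ⊆ pq.2 k}) ''
        ({p | ∀ k, p k ∈ P} ×ˢ {q | ∀ k, q k ∈ Q}) := by
    rintro S ⟨hne, n, p, q, hp, hq, rfl⟩
    exact Set.mem_iUnion.mpr ⟨n, ⟨(p, q), ⟨hp, hq⟩, rfl⟩⟩
  exact Set.Countable.mono hsub (Set.countable_iUnion fun n =>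
    ((Set.countable_pi fun _ => hPc).prod (Set.countable_pi fun _ => hQc)).image _)

lemma pbFamily_closed {P : Set (Set X)} {Q : Set (Set Y)}
    (hQcl : ∀ q ∈ Q, IsClosed q) :
    ∀ S ∈ pbFamily P Q, @IsClosed _ (ccTop X Y) S := by
  letI : TopologicalSpace (CFun X Y) := ccTop X Y
  rintro S ⟨hne, n, p, q, hpP, hqQ, rfl⟩
  rw [← isOpen_compl_iff, isOpen_ccTop_iff]
  intro G g hGg hg
  by_contra hev
  have hfreq : ∃ᶠ m in atTop, G m ∈ {f : CFun X Y | ∀ k, f.1 '' p k ⊆ q k} :=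
    (not_eventually.mp hev).mono fun m hm => not_not.mp hm
  obtain ⟨φ, hφ, hmem⟩ := extraction_of_frequently_atTop hfreq
  apply hg
  intro k yy hyy
  obtain ⟨zz, hzz, rfl⟩ := hyy
  refine (hQcl _ (hqQ k)).mem_of_tendsto
    ((hGg.ptwise zz).comp hφ.tendsto_atTop) (Eventually.of_forall fun i => ?_)
  exact hmem i k ⟨zz, hzz, rfl⟩

lemma ccTop_t2 [T2Space Y] : @T2Space (CFun X Y) (ccTop X Y) := by
  letI : TopologicalSpace (CFun X Y) := ccTop X Y
  constructor
  intro f g hfg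
  have hex : ∃ zz, f.1 zz ≠ g.1 zz := by
    by_contra h
    push_neg at h
    exact hfg (Subtype.ext (funext h))
  obtain ⟨zz, hzz⟩ := hex
  obtain ⟨U, V, hU, hV, hfU, hgV, hUV⟩ := t2_separation hzz
  refine ⟨{h : CFun X Y | h.1 zz ∈ U}, {h : CFun X Y | h.1 zz ∈ V},
    point_open zz hU, point_open zz hV, hfU, hgV, ?_⟩
  rw [Set.disjoint_left]
  intro h h1 h2
  exact Set.disjoint_left.mp hUV h1 h2

lemma pbFamily_inter {P : Set (Set X)} {Q : Set (Set Y)} :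
    ∀ S ∈ pbFamily P Q, ∀ S' ∈ pbFamily P Q, (S ∩ S').Nonempty →
      S ∩ S' ∈ pbFamily P Q := by
  rintro S ⟨hSne, n, p, q, hpP, hqQ, rfl⟩ S' ⟨hS'ne, m, p', q', hp'P, hq'Q, rfl⟩ hne
  refine ⟨hne, n + m, Fin.append p p', Fin.append q q', ?_, ?_, ?_⟩
  · intro k
    induction k using Fin.addCases with
    | left i => rw [Fin.append_left]; exact hpP i
    | right i => rw [Fin.append_right]; exact hp'P i
  · intro k
    induction k using Fin.addCases with
    | left i => rw [Fin.append_left]; exact hqQ i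
    | right i => rw [Fin.append_right]; exact hq'Q i
  · ext g
    simp only [Set.mem_inter_iff, Set.mem_setOf_eq]
    constructor
    · rintro ⟨h1, h2⟩ k
      induction k using Fin.addCases with
      | left i => rw [Fin.append_left, Fin.append_left]; exact h1 i
      | right i => rw [Fin.append_right, Fin.append_right]; exact h2 i
    · intro h
      constructor
      · intro i
        have := h (Fin.castAdd m i)
        rwa [Fin.append_left, Fin.append_left] at this
      · intro i
        have := h (Fin.natAdd n i)
        rwa [Fin.append_right, Fin.append_right] at this


lemma pbFamily_main {P : Set (Set X)} {Q : Set (Set Y)}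
    (hPc : P.Countable) (hP : IsPseudobase P)
    (hQc : Q.Countable) (hQ : IsPseudobase Q)
    (f : CFun X Y) (F : ℕ → CFun X Y)
    (hF : Tendsto F atTop (@nhds _ (ccTop X Y) f))
    (O : Set (CFun X Y)) (hO : IsOpen[ccTop X Y] O) (hfO : f ∈ O) :
    ∃ S ∈ pbFamily P Q, f ∈ S ∧ S ⊆ O ∧ ∀ᶠ n in atTop, F n ∈ S := by
  classical
  rcases isEmpty_or_nonempty X with hX | ⟨⟨x₀⟩⟩
  · refine ⟨Set.univ, ⟨⟨f, trivial⟩, 0, Fin.elim0, Fin.elim0,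
      (fun k => k.elim0), (fun k => k.elim0), ?_⟩, trivial, ?_,
      Eventually.of_forall fun _ => trivial⟩
    · exact (Set.eq_univ_iff_forall.mpr fun g k => k.elim0).symm
    · intro g _
      have hgf : g = f := Subtype.ext (funext fun zz => (hX.false zz).elim)
      rwa [hgf]
  · set D : Set (Set X × Set Y) := {pq | pq.1 ∈ P ∧ pq.2 ∈ Q ∧
      f.1 '' pq.1 ⊆ pq.2 ∧ ∀ᶠ n in atTop, (F n).1 '' pq.1 ⊆ pq.2} with hD
    have hDc : D.Countable :=
      Set.Countable.mono (fun pq hpq => Set.mk_mem_prod hpq.1 hpq.2.1) (hPc.prod hQc)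
    have hDne : D.Nonempty := by
      obtain ⟨p, hp, q, hq, _, hpq1, hpq2, _⟩ :=
        weak_crux hPc hP hQc hQ f F hF x₀ (fun _ => x₀) tendsto_const_nhds
          isOpen_univ (Set.mem_univ _)
      exact ⟨(p, q), hp, hq, hpq1, hpq2⟩
    obtain ⟨d, hd⟩ := hDc.exists_eq_range hDne
    have hdD : ∀ i, d i ∈ D := fun i => hd ▸ Set.mem_range_self i
    have hevS : ∀ m', ∀ᶠ n in atTop, ∀ i < m', (F n).1 '' (d i).1 ⊆ (d i).2 := by
      intro m'
      induction m' with
      | zero => exact Eventually.of_forall fun n i hi => absurd hi (Nat.not_lt_zero i)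
      | succ m' ih =>
        filter_upwards [ih, (hdD m').2.2.2] with n h1 h2 i hi
        rcases Nat.lt_succ_iff_lt_or_eq.mp hi with h | rfl
        exacts [h1 i h, h2]
    by_cases hex : ∃ m, {g : CFun X Y | ∀ i < m, g.1 '' (d i).1 ⊆ (d i).2} ⊆ O
    · obtain ⟨m, hm⟩ := hex
      refine ⟨{g : CFun X Y | ∀ i < m, g.1 '' (d i).1 ⊆ (d i).2},
        ⟨⟨f, fun i _ => (hdD i).2.2.1⟩, m, (fun k => (d k.1).1), (fun k => (d k.1).2),
          (fun k => (hdD k.1).1), (fun k => (hdD k.1).2.1), ?_⟩,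
        (fun i _ => (hdD i).2.2.1), hm, (hevS m).mono (fun n h i hi => h i hi)⟩
      ext g
      exact ⟨fun h k => h k.1 k.2, fun h i hi => h ⟨i, hi⟩⟩
    · exfalso
      push_neg at hex
      have hch : ∀ m, ∃ g : CFun X Y, (∀ i < m, g.1 '' (d i).1 ⊆ (d i).2) ∧ g ∉ O := by
        intro m
        obtain ⟨g, hg1, hg2⟩ := Set.not_subset.mp (hex m)
        exact ⟨g, hg1, hg2⟩
      choose g hg1 hg2 using hch
      have hccs : ContConvSeq g f := by
        intro x u hu
        rw [tendsto_nhds]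
        intro V hV hfxV
        by_contra hev
        obtain ⟨φ, hφ, hbad⟩ := extraction_of_frequently_atTop (not_eventually.mp hev)
        obtain ⟨p, hpP, q, hqQ, hqV, hfpq, hFev, htail⟩ :=
          weak_crux hPc hP hQc hQ f F hF x (u ∘ φ) (hu.comp hφ.tendsto_atTop) hV hfxV
        have hpqD : (p, q) ∈ D := ⟨hpP, hqQ, hfpq, hFev⟩
        rw [hd] at hpqD
        obtain ⟨i₀, hi₀⟩ := hpqD
        obtain ⟨J, hJ⟩ := eventually_atTop.mp htail
        have hmemp : u (φ (max J (i₀ + 1))) ∈ p := hJ _ (le_max_left _ _)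
        have hlt : i₀ < φ (max J (i₀ + 1)) :=
          lt_of_lt_of_le (Nat.lt_of_lt_of_le (Nat.lt_succ_self i₀) (le_max_right J (i₀+1)))
            hφ.le_apply
        have h1 := hg1 (φ (max J (i₀ + 1))) i₀ hlt
        rw [hi₀] at h1
        have h2 : (g (φ (max J (i₀ + 1)))).1 (u (φ (max J (i₀ + 1)))) ∈ q :=
          h1 ⟨u (φ (max J (i₀ + 1))), hmemp, rfl⟩
        exact hbad (max J (i₀ + 1)) (hqV h2)
      obtain ⟨m, hmO⟩ := (hO g f hccs hfO).exists
      exact hg2 m hmO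

end Aux

/-- For sequential Hausdorff spaces `X`, `Y` with countable pseudobases of closed sets,
the function space `C(X,Y)` with (the sequentialization of) the topology of continuous
convergence has a countable pseudobase of closed sets, formed by the nonempty sets
`{f : f[pₖ] ⊆ qₖ, k = 1,…,n}`; moreover each such set is closed and the function space
is Hausdorff. -/
theorem function_space_pseudobase
    (X Y : Type*) [TopologicalSpace X] [T2Space X] [SequentialSpace X]
    [TopologicalSpace Y] [T2Space Y] [SequentialSpace Y]
    (P : Set (Set X)) (Q : Set (Set Y))
    (hPc : P.Countable) (hP : IsPseudobase P) (hPcl : ∀ p ∈ P, IsClosed p)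
    (hQc : Q.Countable) (hQ : IsPseudobase Q) (hQcl : ∀ q ∈ Q, IsClosed q) :
    letI : TopologicalSpace (CFun X Y) := ccTop X Y
    (IsPseudobase {S : Set (CFun X Y) | S.Nonempty ∧
        ∃ (n : ℕ) (p : Fin n → Set X) (q : Fin n → Set Y),
          (∀ k, p k ∈ P) ∧ (∀ k, q k ∈ Q) ∧
          S = {f : CFun X Y | ∀ k, f.1 '' p k ⊆ q k}} ∧
      Set.Countable {S : Set (CFun X Y) | S.Nonempty ∧
        ∃ (n : ℕ) (p : Fin n → Set X) (q : Fin n → Set Y),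
          (∀ k, p k ∈ P) ∧ (∀ k, q k ∈ Q) ∧
          S = {f : CFun X Y | ∀ k, f.1 '' p k ⊆ q k}} ∧
      (∀ S ∈ {S : Set (CFun X Y) | S.Nonempty ∧
        ∃ (n : ℕ) (p : Fin n → Set X) (q : Fin n → Set Y),
          (∀ k, p k ∈ P) ∧ (∀ k, q k ∈ Q) ∧
          S = {f : CFun X Y | ∀ k, f.1 '' p k ⊆ q k}}, IsClosed S) ∧
      T2Space (CFun X Y)) := by
  letI : TopologicalSpace (CFun X Y) := ccTop X Y
  refine ⟨⟨fun S hS => hS.1, pbFamily_inter (P := P) (Q := Q), ?_⟩,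
    pbFamily_countable hPc hQc, pbFamily_closed hQcl, ccTop_t2⟩
  exact fun f F hF O hO hfO => pbFamily_main hPc hP hQc hQ f F hF O hO hfO
end

section
/- Let X and Y be complete separable metric spaces and let ε : Y → X be an isometric embedding. Then ε is the embedding part of a probabilistic embedding-projection pair between Y and X: there exist finite sets Aₙ, maps νₙ : Aₙ → Y, and continuous μₙ : X → PD(Aₙ) such that ε[Y] is functionally closed in X, and whenever xₙ → x in X with x = ε(y) and μₙ(xₙ)(aₙ) > 0 for each n, one has νₙ(aₙ) → y in Y. -/
open Filter

/-- An isometric embedding between complete separable metric spaces is the embedding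
part of a probabilistic embedding-projection pair: there are finite sets `Aₙ = Fin (k n)`
with maps `νₙ : Aₙ → Y` and continuous probability-valued maps `μₙ : X → PD(Aₙ)` such
that `ε[Y]` is functionally closed, and whenever `xₙ → ε y` and `μₙ(xₙ)(aₙ) > 0` for
all `n`, one has `νₙ(aₙ) → y`. -/
theorem isometry_probabilistic_ep_pair
    (X Y : Type*) [MetricSpace X] [CompleteSpace X] [TopologicalSpace.SeparableSpace X]
    [MetricSpace Y] [CompleteSpace Y] [TopologicalSpace.SeparableSpace Y] [Nonempty Y]
    (ε : Y → X) (hε : Isometry ε) :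
    ∃ (k : ℕ → ℕ) (ν : ∀ n, Fin (k n) → Y) (μ : ∀ n, X → Fin (k n) → ℝ),
      (∀ n, Continuous (μ n)) ∧
      (∀ (n : ℕ) (x : X), (∀ a, 0 ≤ μ n x a) ∧ ∑ a, μ n x a = 1) ∧
      (∃ f : X → ℝ, Continuous f ∧ (∀ x, f x ∈ Set.Icc (0 : ℝ) 1) ∧
        Set.range ε = f ⁻¹' {0}) ∧
      (∀ (x : X) (y : Y) (xs : ℕ → X) (s : ∀ n, Fin (k n)),
        Tendsto xs atTop (nhds x) → x = ε y →
        (∀ n, 0 < μ n (xs n) (s n)) →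
        Tendsto (fun n => ν n (s n)) atTop (nhds y)) := by
  classical
  set u : ℕ → Y := TopologicalSpace.denseSeq Y with hu
  have hdense : DenseRange u := TopologicalSpace.denseRange_denseSeq Y
  -- level n: points u 0, ..., u n
  refine ⟨fun n => n + 1, fun n a => u a, ?_⟩
  -- distance to nearest net point
  set D : ∀ n : ℕ, X → ℝ := fun n x =>
    (Finset.univ : Finset (Fin (n+1))).inf' ⟨0, Finset.mem_univ 0⟩
      (fun a => dist x (ε (u a))) with hD
  set w : ∀ n : ℕ, X → Fin (n+1) → ℝ := fun n x a =>
    max (D n x + 1/(n+1) - dist x (ε (u a))) 0 with hw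
  set W : ∀ n : ℕ, X → ℝ := fun n x => ∑ a, w n x a with hW
  have hwnn : ∀ n x a, 0 ≤ w n x a := fun n x a => le_max_right _ _
  have hWpos : ∀ n x, 0 < W n x := by
    intro n x
    obtain ⟨a, -, ha⟩ := Finset.exists_mem_eq_inf' (⟨0, Finset.mem_univ 0⟩ :
      (Finset.univ : Finset (Fin (n+1))).Nonempty) (fun a => dist x (ε (u a)))
    refine Finset.sum_pos' (fun a _ => hwnn n x a) ⟨a, Finset.mem_univ a, ?_⟩
    have h1 : (0:ℝ) < 1/(n+1) := by positivity
    have : w n x a = max (1/(n+1) : ℝ) 0 := by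
      simp only [hw, hD]
      rw [← ha]
      ring_nf
    rw [this]
    simpa using h1
  have hDcont : ∀ n, Continuous (D n) := by
    intro n
    exact Continuous.finset_inf'_apply _ fun a _ => continuous_id.dist continuous_const
  have hwcont : ∀ n a, Continuous fun x => w n x a := by
    intro n a
    exact (((hDcont n).add continuous_const).sub
      (continuous_id.dist continuous_const)).max continuous_const
  have hWcont : ∀ n, Continuous (W n) := fun n =>
    continuous_finset_sum _ fun a _ => hwcont n a
  refine ⟨fun n x a => w n x a / W n x, ?_, ?_, ?_, ?_⟩
  · intro n
    exact continuous_pi fun a => (hwcont n a).div (hWcont n) fun x => (hWpos n x).ne'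
  · intro n x
    refine ⟨fun a => div_nonneg (hwnn n x a) (hWpos n x).le, ?_⟩
    rw [← Finset.sum_div, hW, div_self (hWpos n x).ne']
  · -- functionally closed
    have hclosed : IsClosed (Set.range ε) := hε.isClosedEmbedding.isClosed_range
    have hne : (Set.range ε).Nonempty := Set.range_nonempty ε
    refine ⟨fun x => min (Metric.infDist x (Set.range ε)) 1, ?_, ?_, ?_⟩
    · exact (Metric.continuous_infDist_pt _).min continuous_const
    · intro x
      exact ⟨le_min Metric.infDist_nonneg zero_le_one, min_le_right _ _ |>.trans le_rfl⟩
    · ext x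
      simp only [Set.mem_preimage, Set.mem_singleton_iff]
      constructor
      · rintro ⟨y, rfl⟩
        rw [Metric.infDist_zero_of_mem (Set.mem_range_self y)]
        simp
      · intro h
        have : Metric.infDist x (Set.range ε) = 0 := by
          rcases min_eq_iff.mp h with h' | h'
          · exact h'.1
          · linarith [h'.1]
        have : x ∈ closure (Set.range ε) :=
          (Metric.mem_closure_iff_infDist_zero hne).2 this
        rwa [hclosed.closure_eq] at this
  · intro x y xs s hxs hxy hpos
    have hkey : ∀ n, dist (xs n) (ε (u (s n))) < D n (xs n) + 1/(n+1) := by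
      intro n
      have hwp : 0 < w n (xs n) (s n) := by
        by_contra hc
        push_neg at hc
        have h0 : w n (xs n) (s n) = 0 := le_antisymm hc (hwnn _ _ _)
        have := hpos n
        simp only [h0, zero_div] at this
        exact lt_irrefl _ this
      -- w > 0 means max(...) > 0 so the first arg > 0
      have h2 : 0 < D n (xs n) + 1/(n+1) - dist (xs n) (ε (u (s n))) := by
        by_contra hc
        push_neg at hc
        have : w n (xs n) (s n) = 0 := by
          simp only [hw]; exact max_eq_right hc
        rw [this] at hwp; exact lt_irrefl _ hwp
      linarith
    rw [Metric.tendsto_atTop]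
    intro ρ hρ
    obtain ⟨i, hi⟩ : ∃ i, dist (u i) y < ρ/4 := by
      have : y ∈ closure (Set.range u) := hdense.closure_eq ▸ Set.mem_univ y
      rcases Metric.mem_closure_iff.mp this (ρ/4) (by linarith) with ⟨z, ⟨j, rfl⟩, hz⟩
      exact ⟨j, by rwa [dist_comm]⟩
    rw [Metric.tendsto_atTop] at hxs
    obtain ⟨N₁, hN₁⟩ := hxs (ρ/4) (by linarith)
    obtain ⟨N₂, hN₂⟩ : ∃ N : ℕ, ∀ n ≥ N, 1/((n:ℝ)+1) < ρ/4 := by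
      obtain ⟨N, hN⟩ := exists_nat_gt (4/ρ)
      refine ⟨N, fun n hn => ?_⟩
      have hNn : (N:ℝ) ≤ (n:ℝ) := Nat.cast_le.mpr hn
      have h4 : (4:ℝ)/ρ < (n:ℝ) + 1 := by linarith
      have h5 : (4:ℝ) < ((n:ℝ)+1) * ρ := (div_lt_iff₀ hρ).mp h4
      rw [div_lt_div_iff₀ (by positivity) (by norm_num)]
      linarith
    refine ⟨max i (max N₁ N₂), fun n hn => ?_⟩
    have hni : i ≤ n := le_trans (le_max_left _ _) hn
    have hn1 : N₁ ≤ n := le_trans ((le_max_left _ _).trans (le_max_right _ _)) hn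
    have hn2 : N₂ ≤ n := le_trans ((le_max_right _ _).trans (le_max_right _ _)) hn
    have hDle : D n (xs n) ≤ dist (xs n) (ε (u i)) := by
      simp only [hD]
      exact Finset.inf'_le _ (Finset.mem_univ (⟨i, Nat.lt_succ_of_le hni⟩ : Fin (n+1)))
    have hεi : dist (ε y) (ε (u i)) < ρ/4 := by
      rw [hε.dist_eq, dist_comm]; exact hi
    have hx : dist (xs n) (ε y) < ρ/4 := by
      have := hN₁ n hn1
      rwa [hxy] at this
    have hD2 : D n (xs n) < ρ/2 := by
      calc D n (xs n) ≤ dist (xs n) (ε (u i)) := hDle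
        _ ≤ dist (xs n) (ε y) + dist (ε y) (ε (u i)) := dist_triangle _ _ _
        _ < ρ/4 + ρ/4 := by linarith
        _ = ρ/2 := by ring
    have : dist (ε y) (ε (u (s n))) < ρ := by
      calc dist (ε y) (ε (u (s n))) ≤ dist (xs n) (ε y) + dist (xs n) (ε (u (s n))) := by
            rw [dist_comm (xs n) (ε y)]; exact dist_triangle _ _ _
        _ < ρ/4 + (D n (xs n) + 1/(n+1)) := by linarith [hkey n]
        _ < ρ/4 + (ρ/2 + ρ/4) := by linarith [hN₂ n hn2]
        _ = ρ := by ring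
    rw [hε.dist_eq, dist_comm] at this
    exact this
end
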